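/- arXiv:1111.6800 — 9 statements merged into one kernel-verified Lean document; each statement's English description precedes it below -/
import Mathlib

section
/- Let δ ≥ 0 be an integer and let p < q < r be odd primes with r > pq. Suppose Φ_{pqr} is δ₊-optimal, i.e. the set of coefficients A{pqr} equals the set of integers in the interval [-(p-1)/2 + δ, (p+1)/2 + δ]. Let s > pq be a prime with s ≡ -r (mod pq). Then Φ_{pqs} is δ₋-optimal, i.e. A{pqs} equals the set of integers in the interval [-(p+1)/2 - δ, (p-1)/2 - δ]. -/
open Polynomial Finset

/-!
With `g = (1 + X + ⋯ + X^(q-1)) (X^p - 1)` one has `Φ_{pq} g = X^{pq} - 1`, hence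
`Φ_{pqr}(X) (X^{pq} - 1) = Φ_{pq}(X^r) g(X)`. Multiplying by `1 + X^{pq} + X^{2pq} + ⋯` gives
`a_{pqr}(n) = -∑_{rk ≤ n} a_{pq}(k) ḡ(n - rk)`, where `ḡ` is the `pq`-periodic extension of the
coefficient sequence of `g` (`periodicCofactorCoeff`). For `r > pq` the pairs `(⌊n/r⌋, n mod pq)`
run through all of `ℕ × ℤ/pq`, so `A{pqr}` is the set of values of
`(K, ν) ↦ -∑_{k ≤ K} a_{pq}(k) ḡ(ν - rk)`, which depends on `r` only modulo `pq`.
Since `X^{p+q-1} g(1/X) = -g(X)`, we have `ḡ(p + q - 1 - t) = -ḡ(t)`, so replacing `r` by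
`s ≡ -r (mod pq)` negates every value: `A{pqs} = -A{pqr}`, and the interval is reflected.
-/

lemma coeff_expand_mul_eq_sum {R : Type*} [CommSemiring R] {r : ℕ} (hr : 0 < r)
    (f g : R[X]) (n : ℕ) :
    (expand R r f * g).coeff n = ∑ k ∈ range (n / r + 1), f.coeff k * g.coeff (n - r * k) := by
  induction f using Polynomial.induction_on' with
  | add f₁ f₂ h₁ h₂ => simp only [map_add, add_mul, coeff_add, h₁, h₂, sum_add_distrib]
  | monomial m a =>
    rw [expand_monomial, ← C_mul_X_pow_eq_monomial, mul_assoc, coeff_C_mul, coeff_X_pow_mul']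
    simp only [coeff_monomial, ite_mul, zero_mul, sum_ite_eq, mem_range, Nat.lt_succ_iff,
      Nat.le_div_iff_mul_le hr, mul_ite, mul_zero, mul_comm r m]

noncomputable def cofactor (p q : ℕ) : ℤ[X] := (∑ i ∈ range q, X ^ i) * (X ^ p - 1)

def cofactorCoeff (p q : ℕ) (t : ℤ) : ℤ :=
  (if (p : ℤ) ≤ t ∧ t < p + q then 1 else 0) - (if 0 ≤ t ∧ t < q then 1 else 0)

def periodicCofactorCoeff (p q : ℕ) (t : ℤ) : ℤ := cofactorCoeff p q (t % (p * q))

section Cofactor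

variable {p q : ℕ}

lemma coeff_cofactor (t : ℕ) : (cofactor p q).coeff t = cofactorCoeff p q t := by
  have coeff_geom (j : ℕ) : (∑ i ∈ range q, (X : ℤ[X]) ^ i).coeff j = if j < q then 1 else 0 := by
    simp [coeff_X_pow]
  rw [cofactor, mul_sub, mul_one, coeff_sub, coeff_mul_X_pow', coeff_geom, cofactorCoeff]
  split_ifs <;> first | omega | (rw [coeff_geom]; split_ifs <;> omega)

lemma cofactorCoeff_eq_zero_of_le {t : ℤ} (h : (p : ℤ) + q ≤ t) : cofactorCoeff p q t = 0 := by
  unfold cofactorCoeff; split_ifs <;> omega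

lemma cofactorCoeff_reflect (t : ℤ) :
    cofactorCoeff p q (p + q - 1 - t) = -cofactorCoeff p q t := by
  unfold cofactorCoeff; split_ifs <;> omega

lemma periodicCofactorCoeff_congr {a b : ℤ} (h : a ≡ b [ZMOD p * q]) :
    periodicCofactorCoeff p q a = periodicCofactorCoeff p q b :=
  congrArg (cofactorCoeff p q) h

lemma periodicCofactorCoeff_of_lt {t : ℤ} (h₀ : 0 ≤ t) (h : t < p * q) :
    periodicCofactorCoeff p q t = cofactorCoeff p q t := by
  rw [periodicCofactorCoeff, Int.emod_eq_of_lt h₀ h]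

lemma periodicCofactorCoeff_reflect (hp : 2 ≤ p) (hq : 2 ≤ q) (t : ℤ) :
    periodicCofactorCoeff p q (p + q - 1 - t) = -periodicCofactorCoeff p q t := by
  have hpq : (p : ℤ) + q ≤ p * q := by exact_mod_cast Nat.add_le_mul hp hq
  set a := t % (p * q)
  have ha₀ : 0 ≤ a := Int.emod_nonneg t (by omega)
  have ha : a < p * q := Int.emod_lt_of_pos t (by omega)
  have hta : p + q - 1 - t ≡ p + q - 1 - a [ZMOD p * q] := (Int.mod_modEq t _).symm.sub_left _
  change periodicCofactorCoeff p q _ = -cofactorCoeff p q a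
  rw [periodicCofactorCoeff_congr hta]
  rcases le_or_gt a (p + q - 1) with hac | hac
  · rw [periodicCofactorCoeff_of_lt (by omega) (by omega), cofactorCoeff_reflect]
  · have hwrap : p + q - 1 - a + p * q ≡ p + q - 1 - a [ZMOD p * q] :=
      Int.add_modulus_modEq_iff.mpr rfl
    rw [← periodicCofactorCoeff_congr hwrap, periodicCofactorCoeff_of_lt (by omega) (by omega),
      cofactorCoeff_eq_zero_of_le (by omega), cofactorCoeff_eq_zero_of_le (by omega), neg_zero]

lemma coeff_cofactor_mul_geom_sum (hp : 2 ≤ p) (hq : 2 ≤ q) {m t : ℕ} (ht : t < p * q * m) :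
    (cofactor p q * ∑ j ∈ range m, (X ^ (p * q)) ^ j).coeff t = periodicCofactorCoeff p q t := by
  have hpq : p + q ≤ p * q := Nat.add_le_mul hp hq
  induction m generalizing t with
  | zero => omega
  | succ m ih =>
    rw [geom_sum_succ, mul_add, mul_one, mul_left_comm, coeff_add, coeff_X_pow_mul']
    split_ifs with h
    · rw [ih (by rw [Nat.mul_succ] at ht; omega), coeff_cofactor,
        cofactorCoeff_eq_zero_of_le (by exact_mod_cast hpq.trans h), add_zero,
        Nat.cast_sub h, Nat.cast_mul]
      exact periodicCofactorCoeff_congr (Int.sub_modulus_modEq_iff.mpr rfl)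
    · rw [zero_add, coeff_cofactor,
        periodicCofactorCoeff_of_lt (by positivity) (by exact_mod_cast not_le.mp h)]

lemma cyclotomic_mul_cofactor (hp : p.Prime) (hq : q.Prime) (hpq : p ≠ q) :
    cyclotomic (p * q) ℤ * cofactor p q = X ^ (p * q) - 1 := by
  have := Fact.mk hq
  have hdvd : ¬p ∣ q := fun h => hpq ((Nat.prime_dvd_prime_iff_eq hp hq).mp h)
  have hexpand : expand ℤ p (cyclotomic q ℤ * (X - 1)) = cyclotomic (p * q) ℤ * cofactor p q := by
    rw [map_mul, cyclotomic_expand_eq_cyclotomic_mul hp hdvd, map_sub, expand_X, map_one,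
      mul_comm q p, cofactor, cyclotomic_prime ℤ q]
    ring
  rw [← hexpand, cyclotomic_prime_mul_X_sub_one, map_sub, map_pow, expand_X, map_one, ← pow_mul]

lemma cyclotomic_mul_X_pow_sub_one (hp : p.Prime) (hq : q.Prime) (hpq : p ≠ q) {r : ℕ}
    (hr : r.Prime) (hdiv : ¬r ∣ p * q) (m : ℕ) :
    cyclotomic (p * q * r) ℤ * (X ^ (p * q * m) - 1)
      = expand ℤ r (cyclotomic (p * q) ℤ) * (cofactor p q * ∑ j ∈ range m, (X ^ (p * q)) ^ j) := by
  rw [cyclotomic_expand_eq_cyclotomic_mul hr hdiv, pow_mul, ← geom_sum_mul,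
    ← cyclotomic_mul_cofactor hp hq hpq]
  ring

end Cofactor

noncomputable def coeffSum (p q : ℕ) (ρ : ℤ) (K : ℕ) (ν : ℤ) : ℤ :=
  -∑ k ∈ range (K + 1), (cyclotomic (p * q) ℤ).coeff k * periodicCofactorCoeff p q (ν - ρ * k)

section CoeffSum

variable {p q : ℕ}

lemma coeff_cyclotomic_mul_eq_coeffSum (hp : p.Prime) (hq : q.Prime) (hpq : p ≠ q) {r : ℕ}
    (hr : r.Prime) (hdiv : ¬r ∣ p * q) (n : ℕ) :
    (cyclotomic (p * q * r) ℤ).coeff n = coeffSum p q r (n / r) n := by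
  have hn : n < p * q * (n + 1) := by nlinarith [Nat.mul_pos hp.pos hq.pos]
  have h := congrArg (coeff · n) (cyclotomic_mul_X_pow_sub_one hp hq hpq hr hdiv (n + 1))
  simp only [mul_sub, mul_one, coeff_sub, coeff_mul_X_pow', if_neg (not_le.mpr hn),
    coeff_expand_mul_eq_sum hr.pos, zero_sub] at h
  rw [coeffSum, ← neg_eq_iff_eq_neg, h]
  refine sum_congr rfl fun k hk => ?_
  have hrk : r * k ≤ n := by
    rw [mem_range, Nat.lt_succ_iff, Nat.le_div_iff_mul_le hr.pos] at hk
    linarith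
  rw [coeff_cofactor_mul_geom_sum hp.two_le hq.two_le (by omega), Nat.cast_sub hrk, Nat.cast_mul]

lemma coeffSum_congr {ρ : ℤ} {K : ℕ} {ν ν' : ℤ} (h : ν ≡ ν' [ZMOD p * q]) :
    coeffSum p q ρ K ν = coeffSum p q ρ K ν' := by
  unfold coeffSum
  congr 1
  exact sum_congr rfl fun k _ => congrArg _ (periodicCofactorCoeff_congr (h.sub_right _))

lemma coeffSum_reflect (hp : 2 ≤ p) (hq : 2 ≤ q) {ρ σ : ℤ} (h : σ ≡ -ρ [ZMOD p * q])
    (K : ℕ) (ν : ℤ) : coeffSum p q σ K (p + q - 1 - ν) = -coeffSum p q ρ K ν := by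
  unfold coeffSum
  rw [neg_neg, ← sum_neg_distrib]
  refine sum_congr rfl fun k _ => ?_
  have hσ : p + q - 1 - ν - σ * k ≡ p + q - 1 - (ν - ρ * k) [ZMOD p * q] := by
    convert (h.mul_right (k : ℤ)).sub_left (p + q - 1 - ν) using 1
    ring
  rw [periodicCofactorCoeff_congr hσ, periodicCofactorCoeff_reflect hp hq, mul_neg, neg_neg]

lemma range_coeff_cyclotomic_mul (hp : p.Prime) (hq : q.Prime) (hpq : p ≠ q) {r : ℕ}
    (hr : r.Prime) (hrpq : p * q < r) :
    Set.range (cyclotomic (p * q * r) ℤ).coeff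
      = Set.range (fun x : ℕ × ℤ => coeffSum p q r x.1 x.2) := by
  have hdiv : ¬r ∣ p * q := fun h => (Nat.le_of_dvd (Nat.mul_pos hp.pos hq.pos) h).not_gt hrpq
  ext c
  constructor
  · rintro ⟨n, rfl⟩
    exact ⟨(n / r, n), (coeff_cyclotomic_mul_eq_coeffSum hp hq hpq hr hdiv n).symm⟩
  · rintro ⟨⟨K, ν⟩, rfl⟩
    set u := (ν - r * K) % (p * q)
    have hu₀ : 0 ≤ u := Int.emod_nonneg _ (by simp [hp.ne_zero, hq.ne_zero])
    have hur : u < r :=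
      (Int.emod_lt_of_pos _ (by simp [hp.pos, hq.pos])).trans (by exact_mod_cast hrpq)
    refine ⟨r * K + u.toNat, ?_⟩
    have hquot : (r * K + u.toNat) / r = K := by
      rw [Nat.mul_add_div hr.pos, Nat.div_eq_of_lt (by omega), add_zero]
    rw [coeff_cyclotomic_mul_eq_coeffSum hp hq hpq hr hdiv, hquot]
    apply coeffSum_congr
    push_cast [Int.toNat_of_nonneg hu₀]
    simpa using (Int.mod_modEq (ν - r * K) _).add_left (r * K : ℤ)

lemma range_coeff_cyclotomic_mul_eq_neg (hp : p.Prime) (hq : q.Prime) (hpq : p ≠ q) {r s : ℕ}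
    (hr : r.Prime) (hs : s.Prime) (hrpq : p * q < r) (hspq : p * q < s)
    (hsr : (s : ℤ) ≡ -r [ZMOD p * q]) :
    Set.range (cyclotomic (p * q * s) ℤ).coeff = -Set.range (cyclotomic (p * q * r) ℤ).coeff := by
  have hrs : (r : ℤ) ≡ -s [ZMOD p * q] := by simpa using hsr.neg.symm
  rw [range_coeff_cyclotomic_mul hp hq hpq hr hrpq, range_coeff_cyclotomic_mul hp hq hpq hs hspq]
  ext c
  simp only [Set.mem_neg, Set.mem_range, Prod.exists]
  constructor
  · rintro ⟨K, ν, rfl⟩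
    exact ⟨K, p + q - 1 - ν, coeffSum_reflect hp.two_le hq.two_le hrs K ν⟩
  · rintro ⟨K, ν, h⟩
    exact ⟨K, p + q - 1 - ν, by rw [coeffSum_reflect hp.two_le hq.two_le hsr K ν, h, neg_neg]⟩

end CoeffSum

theorem stmt_0_general (δ : ℤ) (p q r s : ℕ)
    (hp : p.Prime) (hq : q.Prime) (hr : r.Prime) (hs : s.Prime)
    (hpq : p < q) (hrpq : p * q < r)
    (hspq : p * q < s) (hcong : (s : ℤ) ≡ -(r : ℤ) [ZMOD ((p : ℤ) * q)])
    (hopt : {c : ℤ | ∃ k : ℕ, (cyclotomic (p * q * r) ℤ).coeff k = c}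
      = Set.Icc (-(((p : ℤ) - 1) / 2) + δ) (((p : ℤ) + 1) / 2 + δ)) :
    {c : ℤ | ∃ k : ℕ, (cyclotomic (p * q * s) ℤ).coeff k = c}
      = Set.Icc (-(((p : ℤ) + 1) / 2) - δ) (((p : ℤ) - 1) / 2 - δ) := by
  change Set.range _ = _ at hopt ⊢
  rw [range_coeff_cyclotomic_mul_eq_neg hp hq hpq.ne hr hs hrpq hspq hcong, hopt, Set.neg_Icc]
  congr 1 <;> ring

/-- If `Φ_{pqr}` is `δ₊`-optimal, `r > pq` and `s > pq` is a prime with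
`s ≡ -r (mod pq)`, then `Φ_{pqs}` is `δ₋`-optimal. -/
theorem stmt_0 (δ : ℤ) (hδ : 0 ≤ δ) (p q r s : ℕ)
    (hp : p.Prime) (hq : q.Prime) (hr : r.Prime) (hs : s.Prime)
    (hpodd : Odd p) (hqodd : Odd q) (hrodd : Odd r)
    (hpq : p < q) (hqr : q < r) (hrpq : p * q < r)
    (hspq : p * q < s) (hcong : (s : ℤ) ≡ -(r : ℤ) [ZMOD ((p : ℤ) * q)])
    (hopt : {c : ℤ | ∃ k : ℕ, (cyclotomic (p * q * r) ℤ).coeff k = c}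
      = Set.Icc (-(((p : ℤ) - 1) / 2) + δ) (((p : ℤ) + 1) / 2 + δ)) :
    {c : ℤ | ∃ k : ℕ, (cyclotomic (p * q * s) ℤ).coeff k = c}
      = Set.Icc (-(((p : ℤ) + 1) / 2) - δ) (((p : ℤ) - 1) / 2 - δ) :=
  stmt_0_general δ p q r s hp hq hr hs hpq hrpq hspq hcong hopt
end

section
/- (Kaplan's Lemma) Let 2 < p < q < r be primes and let k ≥ 0 be an integer. For an integer i ≥ 0 put b_i = a_{pq}(i) if r·i ≤ k and b_i = 0 otherwise. For an integer m, let f(m) be the unique integer with 0 ≤ f(m) < pq and r·f(m) ≡ k - m (mod pq). Then a_{pqr}(k) = Σ_{m=0}^{p-1} (b_{f(m)} - b_{f(m+q)}). -/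
/-!
From `Φ_{pq}(X^r) = Φ_{pqr} Φ_{pq}` and `Φ_{pq} (1 - X^p) (1 - X^q) = (1 - X^{pq}) (1 - X)`
one gets, in `ℤ⟦X⟧`, `Φ_{pqr} = Φ_{pq}(X^r) · (1 + X + ⋯ + X^{p-1}) (1 - X^q) / (1 - X^{pq})`,
and the last factor is the periodic series `∑_{m<p} (I_m - I_{m+q})`, with `I_t` the indicator
series of the residue class of `t` modulo `pq`. The coefficient of `X^k` in `Φ_{pq}(X^r) · I_t`
sums `a_{pq}(i)` over the `i` with `r i ≤ k` and `r i ≡ k - t (mod pq)`; as `r` is invertible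
modulo `pq` and `deg Φ_{pq} < pq`, only `i = f(t)` can contribute.
-/

open Polynomial Finset
open scoped PowerSeries

theorem cyclotomic_prime_mul_prime_mul_eq (R : Type*) [CommRing R] {p q : ℕ} (hp : p.Prime)
    (hq : q.Prime) (hpq : p ≠ q) :
    cyclotomic (p * q) R * ((1 - X ^ p) * (1 - X ^ q)) = (1 - X ^ (p * q)) * (1 - X) := by
  have hqp : ¬q ∣ p := fun h => hpq ((Nat.prime_dvd_prime_iff_eq hq hp).mp h).symm
  have := Fact.mk hp
  have hcp : cyclotomic p R * (X - 1) = X ^ p - 1 := cyclotomic_prime_mul_X_sub_one R p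
  have hcpq : cyclotomic (p * q) R * cyclotomic p R * (X ^ q - 1) = X ^ (p * q) - 1 := by
    simpa [cyclotomic_expand_eq_cyclotomic_mul hq hqp, pow_mul'] using
      congrArg (expand R q) hcp
  linear_combination (X - 1 : R[X]) * hcpq - cyclotomic (p * q) R * (X ^ q - 1) * hcp

theorem Nat.sub_mul_mod_eq_iff {N r i j k t : ℕ} (hrN : r.Coprime N) (hi : i < N) (hj : j < N)
    (ht : t < N) (hjk : r * j ≤ k) (hcong : (r : ℤ) * i ≡ k - t [ZMOD N]) :
    (k - r * j) % N = t ↔ j = i := by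
  have hr : IsUnit (r : ZMod N) := (ZMod.isUnit_iff_coprime r N).mpr hrN
  rw [← ZMod.intCast_eq_intCast_iff] at hcong
  push_cast at hcong
  calc (k - r * j) % N = t ↔ ((k - r * j : ℕ) : ZMod N) = t := by
        rw [ZMod.natCast_eq_natCast_iff', Nat.mod_eq_of_lt ht]
    _ ↔ (r : ZMod N) * j = r * i := by
        rw [Nat.cast_sub hjk, hcong]
        push_cast
        constructor <;> intro h <;> linear_combination -h
    _ ↔ (j : ZMod N) = i := hr.mul_right_inj
    _ ↔ j = i := by rw [ZMod.natCast_eq_natCast_iff', Nat.mod_eq_of_lt hj, Nat.mod_eq_of_lt hi]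

def residueSeries (R : Type*) [Semiring R] (N t : ℕ) : R⟦X⟧ :=
  PowerSeries.mk fun n => if n % N = t then 1 else 0

theorem residueSeries_mul_one_sub_X_pow (R : Type*) [Ring R] {N t : ℕ} (ht : t < N) :
    residueSeries R N t * (1 - PowerSeries.X ^ N) = PowerSeries.X ^ t := by
  ext n
  rw [mul_sub, mul_one, map_sub, PowerSeries.coeff_mul_X_pow', PowerSeries.coeff_X_pow]
  simp only [residueSeries, PowerSeries.coeff_mk]
  rcases lt_or_ge n N with hn | hn
  · rw [Nat.mod_eq_of_lt hn, if_neg (not_le.mpr hn), sub_zero]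
  · rw [if_pos hn, ← Nat.mod_eq_sub_mod hn, sub_self, if_neg (by omega)]

theorem coeff_expand_mul_residueSeries {R : Type*} [CommSemiring R] {A : R[X]} {N r i k t : ℕ}
    (hA : A.natDegree < N) (hrN : r.Coprime N) (hi : i < N) (ht : t < N)
    (hcong : (r : ℤ) * i ≡ k - t [ZMOD N]) :
    PowerSeries.coeff k ((expand R r A : R⟦X⟧) * residueSeries R N t) =
      if r * i ≤ k then A.coeff i else 0 := by
  have hexp : (expand R r A : R⟦X⟧) =
      ∑ j ∈ range N, PowerSeries.C (A.coeff j) * PowerSeries.X ^ (r * j) := by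
    conv_lhs => rw [← coeToPowerSeries.ringHom_apply, as_sum_range_C_mul_X_pow' A hA]
    simp [map_sum, pow_mul]
  rw [hexp, Finset.sum_mul, map_sum]
  simp_rw [mul_assoc, PowerSeries.coeff_C_mul, PowerSeries.coeff_X_pow_mul', residueSeries,
    PowerSeries.coeff_mk]
  rw [Finset.sum_eq_single_of_mem i (mem_range.mpr hi)]
  · split_ifs with hik hit
    · exact mul_one _
    · exact absurd ((Nat.sub_mul_mod_eq_iff hrN hi hi ht hik hcong).mpr rfl) hit
    · exact mul_zero _
  · intro j hj hji
    split_ifs with hjk hjt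
    · exact absurd ((Nat.sub_mul_mod_eq_iff hrN hi (mem_range.mp hj) ht hjk hcong).mp hjt) hji
    all_goals simp

theorem coe_cyclotomic_mul_prime_eq_expand_mul_residueSeries (R : Type*) [CommRing R]
    {p q r : ℕ} (hp : p.Prime) (hq : q.Prime) (hr : r.Prime) (hpq : p ≠ q)
    (hrpq : ¬r ∣ p * q) :
    (cyclotomic (p * q * r) R : R⟦X⟧) = expand R r (cyclotomic (p * q) R) *
      ∑ m ∈ range p, (residueSeries R (p * q) m - residueSeries R (p * q) (m + q)) := by
  have hqp : q + p ≤ p * q := by nlinarith [hp.two_le, hq.two_le]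
  have hunit : IsUnit ((1 - PowerSeries.X ^ (p * q)) * (1 - PowerSeries.X) : R⟦X⟧) := by
    rw [PowerSeries.isUnit_iff_constantCoeff]
    simp [zero_pow (Nat.mul_pos hp.pos hq.pos).ne']
  have hperiodic :
      (∑ m ∈ range p, (residueSeries R (p * q) m - residueSeries R (p * q) (m + q))) *
        (1 - PowerSeries.X ^ (p * q)) =
      ∑ m ∈ range p, (PowerSeries.X ^ m - PowerSeries.X ^ (m + q)) := by
    rw [Finset.sum_mul]
    refine sum_congr rfl fun m hm => ?_
    have := mem_range.mp hm
    rw [sub_mul, residueSeries_mul_one_sub_X_pow R (by omega),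
      residueSeries_mul_one_sub_X_pow R (by omega)]
  have hgeom : (∑ m ∈ range p, (PowerSeries.X ^ m - PowerSeries.X ^ (m + q) : R⟦X⟧)) *
      (1 - PowerSeries.X) = (1 - PowerSeries.X ^ p) * (1 - PowerSeries.X ^ q) := by
    simp_rw [pow_add]
    rw [sum_sub_distrib, ← sum_mul]
    linear_combination (PowerSeries.X ^ q - 1) * geom_sum_mul (PowerSeries.X : R⟦X⟧) p
  have hpoly : cyclotomic (p * q * r) R * ((1 - X ^ (p * q)) * (1 - X)) =
      expand R r (cyclotomic (p * q) R) * ((1 - X ^ p) * (1 - X ^ q)) := by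
    rw [cyclotomic_expand_eq_cyclotomic_mul hr hrpq, mul_assoc (cyclotomic _ R),
      cyclotomic_prime_mul_prime_mul_eq R hp hq hpq]
  have hseries := congrArg (fun P : R[X] => (P : R⟦X⟧)) hpoly
  push_cast at hseries
  rw [← hunit.mul_left_inj]
  linear_combination hseries - (expand R r (cyclotomic (p * q) R) : R⟦X⟧) *
    (hgeom + (1 - PowerSeries.X) * hperiodic)

theorem stmt_3_general (p q r : ℕ) (hp : p.Prime) (hq : q.Prime) (hr : r.Prime)
    (hpq : p < q) (hqr : q < r) (k : ℕ)
    (b : ℕ → ℤ)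
    (hb : ∀ i : ℕ, b i = if r * i ≤ k then (cyclotomic (p * q) ℤ).coeff i else 0)
    (f : ℕ → ℕ)
    (hf : ∀ m : ℕ, f m < p * q ∧
      (r : ℤ) * (f m : ℤ) ≡ (k : ℤ) - (m : ℤ) [ZMOD ((p : ℤ) * q)]) :
    (cyclotomic (p * q * r) ℤ).coeff k
      = ∑ m ∈ Finset.range p, (b (f m) - b (f (m + q))) := by
  have hrpq : ¬r ∣ p * q := fun h => by
    rcases hr.dvd_mul.mp h with h | h
    · exact absurd (Nat.le_of_dvd hp.pos h) (by omega)
    · exact absurd (Nat.le_of_dvd hq.pos h) (by omega)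
  have hqp : q + p ≤ p * q := by nlinarith [hp.two_le, hq.two_le]
  have hdeg : (cyclotomic (p * q) ℤ).natDegree < p * q := by
    rw [natDegree_cyclotomic]
    exact Nat.totient_lt _ (by have := hp.two_le; omega)
  have hcoeff (t : ℕ) (ht : t < p * q) : PowerSeries.coeff k
      ((expand ℤ r (cyclotomic (p * q) ℤ) : ℤ⟦X⟧) * residueSeries ℤ (p * q) t) = b (f t) := by
    rw [hb, coeff_expand_mul_residueSeries hdeg ((hr.coprime_iff_not_dvd).mpr hrpq) (hf t).1
      ht (by exact_mod_cast (hf t).2)]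
  rw [← Polynomial.coeff_coe, coe_cyclotomic_mul_prime_eq_expand_mul_residueSeries ℤ hp hq hr
    hpq.ne hrpq, mul_sum, map_sum]
  refine sum_congr rfl fun m hm => ?_
  have := mem_range.mp hm
  rw [mul_sub, map_sub, hcoeff m (by omega), hcoeff (m + q) (by omega)]

/-- Kaplan's Lemma: for primes `2 < p < q < r` and `k ≥ 0`, with
`b i = a_{pq}(i)` if `r·i ≤ k` and `0` otherwise, and `f m` the unique residue
mod `pq` of `r⁻¹(k - m)`, we have
`a_{pqr}(k) = ∑_{m=0}^{p-1} (b_{f(m)} - b_{f(m+q)})`. -/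
theorem stmt_3 (p q r : ℕ) (hp : p.Prime) (hq : q.Prime) (hr : r.Prime)
    (h2p : 2 < p) (hpq : p < q) (hqr : q < r) (k : ℕ)
    (b : ℕ → ℤ)
    (hb : ∀ i : ℕ, b i = if r * i ≤ k then (cyclotomic (p * q) ℤ).coeff i else 0)
    (f : ℕ → ℕ)
    (hf : ∀ m : ℕ, f m < p * q ∧
      (r : ℤ) * (f m : ℤ) ≡ (k : ℤ) - (m : ℤ) [ZMOD ((p : ℤ) * q)]) :
    (cyclotomic (p * q * r) ℤ).coeff k
      = ∑ m ∈ Finset.range p, (b (f m) - b (f (m + q))) :=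
  stmt_3_general p q r hp hq hr hpq hqr k b hb f hf
end

section
/- Let p < q be odd primes and let ρ and σ be the unique non-negative integers with 1 + pq = (ρ+1)p + (σ+1)q. Let 0 ≤ m < pq, let α₁ be the unique integer with 0 ≤ α₁ ≤ q-1 and α₁ p ≡ m (mod q), and let β₁ be the unique integer with 0 ≤ β₁ ≤ p-1 and β₁ q ≡ m (mod p). Then either m = α₁ p + β₁ q or m = α₁ p + β₁ q - pq, and the coefficient a_{pq}(m) equals 1 if m = α₁ p + β₁ q with 0 ≤ α₁ ≤ ρ and 0 ≤ β₁ ≤ σ; it equals -1 if m = α₁ p + β₁ q - pq with ρ+1 ≤ α₁ ≤ q-1 and σ+1 ≤ β₁ ≤ p-1; and it equals 0 otherwise. -/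
/-!
Lam–Leung. From `Φ_p Φ_q Φ_pq (X - 1) = X^(pq) - 1`, `Φ_p (X - 1) = X^p - 1` and
`Φ_q (X - 1) = X^q - 1` one gets `Φ_pq (X^p - 1)(X^q - 1) = (X^(pq) - 1)(X - 1)`. With
`a = (ρ+1)p` and `b = (σ+1)q`, so that `a + b = pq + 1`, the right side equals
`(X^a - 1)(X^b - 1) - X^(-pq) (X^(pq) - X^a)(X^(pq) - X^b)`, and dividing by
`(X^p - 1)(X^q - 1)` turns each factor into a geometric sum:
`Φ_pq = ∑_{i ≤ ρ, j ≤ σ} X^(pi+qj) - ∑_{ρ < i < q, σ < j < p} X^(pi+qj-pq)`.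
By the Chinese remainder theorem the exponents `pi + qj` with `i < q`, `j < p` are pairwise
incongruent mod `pq`, and `pα₁ + qβ₁` is the one congruent to `m`; so each sum contributes to
the coefficient of `X^m` at most the single term indexed by `(α₁, β₁)`.
-/

open Polynomial Finset

theorem Finset.card_filter_eq_ite_of_unique {α : Type*} [DecidableEq α] {s : Finset α}
    {P : α → Prop} [DecidablePred P] {a : α} (h : ∀ x ∈ s, P x → x = a) :
    #{x ∈ s | P x} = if a ∈ s ∧ P a then 1 else 0 := by
  split_ifs with ha
  · rw [card_eq_one]
    exact ⟨a, by ext x; simp only [mem_filter, mem_singleton]; grind⟩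
  · rw [card_eq_zero, filter_eq_empty_iff]
    grind

namespace Nat

theorem eq_or_eq_add_of_modEq {n m N : ℕ} (h : n ≡ m [MOD N]) (hm : m < N) (hn : n < 2 * N) :
    n = m ∨ n = m + N := by
  have hdiv := div_add_mod n N
  rw [h, mod_eq_of_lt hm] at hdiv
  have : n / N < 2 := Nat.div_lt_of_lt_mul (by linarith)
  interval_cases n / N <;> omega

theorem mul_modEq_iff_eq {p q m α i : ℕ} (hpq : p.Coprime q) (hα : α * p ≡ m [MOD q])
    (hαq : α < q) (hi : i < q) : p * i ≡ m [MOD q] ↔ i = α := by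
  rw [mul_comm] at hα
  refine ⟨fun h => ?_, fun h => h ▸ hα⟩
  exact (ModEq.cancel_left_of_coprime hpq.symm (h.trans hα.symm)).eq_of_lt_of_lt hi hαq

theorem mul_add_mul_modEq_iff {p q m α β i j : ℕ} (hpq : p.Coprime q)
    (hα : α * p ≡ m [MOD q]) (hβ : β * q ≡ m [MOD p]) (hαq : α < q) (hβp : β < p)
    (hi : i < q) (hj : j < p) : p * i + q * j ≡ m [MOD p * q] ↔ i = α ∧ j = β := by
  rw [← modEq_and_modEq_iff_modEq_mul hpq, and_comm, ← mul_modEq_iff_eq hpq hα hαq hi,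
    ← mul_modEq_iff_eq hpq.symm hβ hβp hj]
  simp only [ModEq, add_mul_mod_self_left, mul_add_mod_self_left]

theorem succ_le_of_one_add_mul_eq {p q ρ σ : ℕ} (hp : 0 < p) (hq : 0 < q)
    (h : 1 + p * q = (ρ + 1) * p + (σ + 1) * q) : ρ + 1 ≤ q :=
  le_of_mul_le_mul_right (by nlinarith) hp

theorem mul_lt_mul_add_mul {p q ρ σ i j : ℕ} (h : 1 + p * q = (ρ + 1) * p + (σ + 1) * q)
    (hi : ρ + 1 ≤ i) (hj : σ + 1 ≤ j) : p * q < p * i + q * j := by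
  nlinarith

end Nat

namespace Polynomial

variable {R : Type*} [CommRing R]

theorem coeff_sum_sum_X_pow {ι κ : Type*} (s : Finset ι) (t : Finset κ) (e : ι → κ → ℕ)
    (n : ℕ) :
    (∑ i ∈ s, ∑ j ∈ t, (X : R[X]) ^ e i j).coeff n = #{x ∈ s ×ˢ t | e x.1 x.2 = n} := by
  rw [← sum_product', finsetSum_coeff, card_filter, Nat.cast_sum]
  refine sum_congr rfl fun x _ => ?_
  rw [coeff_X_pow]
  split_ifs <;> simp_all [eq_comm]

theorem geom_sum_Ico_X_pow_mul (p m n : ℕ) (hmn : m ≤ n) :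
    (∑ i ∈ Ico m n, (X : R[X]) ^ (p * i)) * (X ^ p - 1) = X ^ (p * n) - X ^ (p * m) := by
  simpa only [pow_mul] using geom_sum_Ico_mul ((X : R[X]) ^ p) hmn

theorem cyclotomic_prime_mul_prime_mul_X_pow_sub_one {p q : ℕ} (hp : p.Prime) (hq : q.Prime)
    (hpq : p ≠ q) :
    cyclotomic (p * q) R * ((X ^ p - 1) * (X ^ q - 1)) = (X ^ (p * q) - 1) * (X - 1) := by
  have := Fact.mk hp
  have := Fact.mk hq
  have hexpand : expand R p (cyclotomic q R) = cyclotomic (p * q) R * cyclotomic q R := by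
    rw [mul_comm p q]
    exact cyclotomic_expand_eq_cyclotomic_mul hp (mt (Nat.prime_dvd_prime_iff_eq hp hq).1 hpq) R
  have hXq := cyclotomic_prime_mul_X_sub_one R q
  have hXpq : expand R p (cyclotomic q R) * (X ^ p - 1) = X ^ (p * q) - 1 := by
    simpa [pow_mul] using congrArg (expand R p) hXq
  rw [← hXpq, hexpand, ← hXq]
  ring

/-- On the second sum `p * q < p * i + q * j`, so its exponent does not truncate: the term is
`X^(p i + q j) / X^(p q)`. -/
theorem cyclotomic_prime_mul_prime_eq_sum_sub_sum {p q : ℕ} (hp : p.Prime) (hq : q.Prime)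
    (hpq : p ≠ q) {ρ σ : ℕ} (hρσ : 1 + p * q = (ρ + 1) * p + (σ + 1) * q) :
    cyclotomic (p * q) R =
      ∑ i ∈ range (ρ + 1), ∑ j ∈ range (σ + 1), X ^ (p * i + q * j) -
        ∑ i ∈ Ico (ρ + 1) q, ∑ j ∈ Ico (σ + 1) p, X ^ (p * i + q * j - p * q) := by
  have hA := geom_sum_Ico_X_pow_mul (R := R) p 0 (ρ + 1) (by omega)
  have hB := geom_sum_Ico_X_pow_mul (R := R) q 0 (σ + 1) (by omega)
  have hC := geom_sum_Ico_X_pow_mul (R := R) p (ρ + 1) q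
    (Nat.succ_le_of_one_add_mul_eq hp.pos hq.pos hρσ)
  have hD := geom_sum_Ico_X_pow_mul (R := R) q (σ + 1) p
    (Nat.succ_le_of_one_add_mul_eq (σ := ρ) hq.pos hp.pos (by linarith))
  rw [← range_eq_Ico, mul_zero, pow_zero] at hA hB
  rw [mul_comm q p] at hD
  have h₁ : ∑ i ∈ range (ρ + 1), ∑ j ∈ range (σ + 1), (X : R[X]) ^ (p * i + q * j) =
      (∑ i ∈ range (ρ + 1), X ^ (p * i)) * ∑ j ∈ range (σ + 1), X ^ (q * j) := by
    simp only [sum_mul_sum, pow_add]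
  have h₂ :
      (∑ i ∈ Ico (ρ + 1) q, ∑ j ∈ Ico (σ + 1) p, (X : R[X]) ^ (p * i + q * j - p * q)) *
        X ^ (p * q) =
      (∑ i ∈ Ico (ρ + 1) q, X ^ (p * i)) * ∑ j ∈ Ico (σ + 1) p, X ^ (q * j) := by
    rw [sum_mul_sum, sum_mul]
    refine sum_congr rfl fun i hi => ?_
    rw [sum_mul]
    refine sum_congr rfl fun j hj => ?_
    rw [← pow_add, ← pow_add]
    rw [mem_Ico] at hi hj
    exact congrArg _ (Nat.sub_add_cancel (Nat.mul_lt_mul_add_mul hρσ hi.1 hj.1).le)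
  have hab : (X : R[X]) ^ (p * (ρ + 1)) * X ^ (q * (σ + 1)) = X ^ (p * q) * X := by
    rw [← pow_add, ← pow_succ]
    congr 1
    linarith
  have hM : ((X ^ p - 1) * (X ^ q - 1) * X ^ (p * q) : R[X]).Monic :=
    ((monic_X_pow_sub_C 1 hp.ne_zero).mul (monic_X_pow_sub_C 1 hq.ne_zero)).mul (monic_X_pow _)
  refine hM.isRegular.right ?_
  linear_combination
    X ^ (p * q) * cyclotomic_prime_mul_prime_mul_X_pow_sub_one (R := R) hp hq hpq
    - (X ^ p - 1) * (X ^ q - 1) * X ^ (p * q) * h₁ + (X ^ p - 1) * (X ^ q - 1) * h₂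
    - (∑ j ∈ range (σ + 1), X ^ (q * j)) * (X ^ q - 1) * X ^ (p * q) * hA
    - (X ^ (p * (ρ + 1)) - 1) * X ^ (p * q) * hB
    + (∑ j ∈ Ico (σ + 1) p, X ^ (q * j)) * (X ^ q - 1) * hC
    + (X ^ (p * q) - X ^ (p * (ρ + 1))) * hD + (1 - X ^ (p * q)) * hab

theorem coeff_cyclotomic_prime_mul_prime {p q : ℕ} (hp : p.Prime) (hq : q.Prime)
    (hpq : p ≠ q) {ρ σ : ℕ} (hρσ : 1 + p * q = (ρ + 1) * p + (σ + 1) * q) (m : ℕ) :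
    (cyclotomic (p * q) R).coeff m =
      #{x ∈ range (ρ + 1) ×ˢ range (σ + 1) | p * x.1 + q * x.2 = m} -
        #{x ∈ Ico (ρ + 1) q ×ˢ Ico (σ + 1) p | p * x.1 + q * x.2 = m + p * q} := by
  rw [cyclotomic_prime_mul_prime_eq_sum_sub_sum hp hq hpq hρσ, coeff_sub, coeff_sum_sum_X_pow,
    coeff_sum_sum_X_pow]
  congr 3
  refine filter_congr fun x hx => ?_
  rw [mem_product, mem_Ico, mem_Ico] at hx
  have := Nat.mul_lt_mul_add_mul hρσ hx.1.1 hx.2.1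
  omega

end Polynomial

theorem stmt_4_general (p q : ℕ) (hp : p.Prime) (hq : q.Prime)
    (hpq : p < q)
    (ρ σ : ℕ) (hρσ : 1 + p * q = (ρ + 1) * p + (σ + 1) * q)
    (m : ℕ) (hm : m < p * q)
    (α₁ : ℕ) (hα₁ : α₁ ≤ q - 1) (hα₁' : α₁ * p ≡ m [MOD q])
    (β₁ : ℕ) (hβ₁ : β₁ ≤ p - 1) (hβ₁' : β₁ * q ≡ m [MOD p]) :
    ((m : ℤ) = α₁ * p + β₁ * q ∨ (m : ℤ) = α₁ * p + β₁ * q - p * q) ∧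
    (cyclotomic (p * q) ℤ).coeff m =
      if (m : ℤ) = (α₁ : ℤ) * p + β₁ * q ∧ α₁ ≤ ρ ∧ β₁ ≤ σ then 1
      else if (m : ℤ) = (α₁ : ℤ) * p + β₁ * q - p * q ∧ ρ + 1 ≤ α₁ ∧ σ + 1 ≤ β₁ then -1
      else 0 := by
  have hαq : α₁ < q := by omega
  have hβp : β₁ < p := by have := hp.pos; omega
  have hρ := Nat.succ_le_of_one_add_mul_eq hp.pos hq.pos hρσ
  have hσ : σ + 1 ≤ p := Nat.succ_le_of_one_add_mul_eq (σ := ρ) hq.pos hp.pos (by linarith)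
  have crt {i j : ℕ} (hi : i < q) (hj : j < p) :=
    Nat.mul_add_mul_modEq_iff ((Nat.coprime_primes hp hq).2 hpq.ne) hα₁' hβ₁' hαq hβp hi hj
  have hrep : p * α₁ + q * β₁ = m ∨ p * α₁ + q * β₁ = m + p * q :=
    Nat.eq_or_eq_add_of_modEq ((crt hαq hβp).2 ⟨rfl, rfl⟩) hm (by nlinarith)
  have hunique {s : Finset (ℕ × ℕ)} {n : ℕ} (hs : ∀ x ∈ s, x.1 < q ∧ x.2 < p)
      (hn : n ≡ m [MOD p * q]) (x : ℕ × ℕ) (hx : x ∈ s) (he : p * x.1 + q * x.2 = n) :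
      x = (α₁, β₁) :=
    Prod.ext_iff.2 ((crt (hs x hx).1 (hs x hx).2).1 (he ▸ hn))
  rw [coeff_cyclotomic_prime_mul_prime hp hq hpq.ne hρσ,
    card_filter_eq_ite_of_unique (hunique (by simp only [mem_product, mem_range]; omega) rfl),
    card_filter_eq_ite_of_unique (hunique (by simp only [mem_product, mem_Ico]; omega)
      (Nat.add_mod_right m (p * q)))]
  have e₁ : (m : ℤ) = α₁ * p + β₁ * q ↔ p * α₁ + q * β₁ = m := by
    rw [eq_comm]; norm_cast; rw [mul_comm α₁, mul_comm β₁]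
  have e₂ : (m : ℤ) = α₁ * p + β₁ * q - p * q ↔ p * α₁ + q * β₁ = m + p * q := by
    rw [eq_sub_iff_add_eq, eq_comm]; norm_cast; rw [mul_comm α₁, mul_comm β₁]
  simp only [e₁, e₂, mem_product, mem_range, mem_Ico]
  refine ⟨hrep, ?_⟩
  have := Nat.mul_pos hp.pos hq.pos
  split_ifs <;> omega

/-- Coefficients of binary cyclotomic polynomials (Lam–Leung). -/
theorem stmt_4 (p q : ℕ) (hp : p.Prime) (hq : q.Prime)
    (hpodd : Odd p) (hqodd : Odd q) (hpq : p < q)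
    (ρ σ : ℕ) (hρσ : 1 + p * q = (ρ + 1) * p + (σ + 1) * q)
    (m : ℕ) (hm : m < p * q)
    (α₁ : ℕ) (hα₁ : α₁ ≤ q - 1) (hα₁' : α₁ * p ≡ m [MOD q])
    (β₁ : ℕ) (hβ₁ : β₁ ≤ p - 1) (hβ₁' : β₁ * q ≡ m [MOD p]) :
    ((m : ℤ) = α₁ * p + β₁ * q ∨ (m : ℤ) = α₁ * p + β₁ * q - p * q) ∧
    (cyclotomic (p * q) ℤ).coeff m =
      if (m : ℤ) = (α₁ : ℤ) * p + β₁ * q ∧ α₁ ≤ ρ ∧ β₁ ≤ σ then 1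
      else if (m : ℤ) = (α₁ : ℤ) * p + β₁ * q - p * q ∧ ρ + 1 ≤ α₁ ∧ σ + 1 ≤ β₁ then -1
      else 0 :=
  stmt_4_general p q hp hq hpq ρ σ hρσ m hm α₁ hα₁ hα₁' β₁ hβ₁ hβ₁'
end

section
/- Let l ≥ 1 be an odd integer, let p ≥ l² + 3l + 5 be a prime, and let a be the integer with 0 ≤ a ≤ p-1 and (l+2)a ≡ 2 (mod p). Then a lies in the union of intervals [l+2, (p-l-2)/2] ∪ [(p+l+2)/2, p-l-2]. -/
/-!
Write `(l + 2) a = p m + 2`. The range `0 ≤ a ≤ p - 1` forces `1 ≤ m ≤ l + 1`, and `p > l² + 3l + 4`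
then pushes `a` at least `l + 2` away from both `0` and `p`. Doubling gives
`(l + 2)(2a - p) - 4 = p (2m - l - 2)`, whose right side is a nonzero multiple of `p` because `l` is
odd; so `|2a - p| ≤ l` would make a nonzero multiple of `p` smaller than `p` in absolute value.
-/

section

variable {l n a m : ℤ}

lemma pos_of_add_two_mul_eq (h : (l + 2) * a = n * m + 2) (hl : 1 ≤ l) (hn : 2 < n)
    (ha : 0 ≤ a) : 0 < m := by
  by_contra! hm
  rcases hm.lt_or_eq with hm | rfl
  · nlinarith
  · rcases ha.lt_or_eq with ha | rfl <;> nlinarith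

lemma le_add_one_of_add_two_mul_eq (h : (l + 2) * a = n * m + 2) (hl : -2 ≤ l) (hn : 0 < n)
    (ha : a ≤ n - 1) : m ≤ l + 1 := by
  have : n * m < n * (l + 2) := by nlinarith
  have := lt_of_mul_lt_mul_left this hn.le
  omega

lemma add_two_le_of_add_two_mul_eq (h : (l + 2) * a = n * m + 2) (hl : 0 ≤ l)
    (hn : l ^ 2 + 3 * l < n) (hm : 0 < m) : l + 2 ≤ a := by
  by_contra! ha
  nlinarith

lemma le_sub_of_add_two_mul_eq (h : (l + 2) * a = n * m + 2) (hl : 0 ≤ l)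
    (hn : l ^ 2 + 3 * l + 4 < n) (hm : m ≤ l + 1) : a ≤ n - l - 2 := by
  by_contra! ha
  nlinarith

lemma lt_abs_two_mul_sub_of_add_two_mul_eq (h : (l + 2) * a = n * m + 2) (hl : 0 ≤ l)
    (hlodd : Odd l) (hn : l ^ 2 + 2 * l + 4 < n) : l < |2 * a - n| := by
  by_contra! hlt
  have hdvd : n ∣ (l + 2) * (2 * a - n) - 4 := ⟨2 * m - l - 2, by linear_combination 2 * h⟩
  have hsmall : |(l + 2) * (2 * a - n) - 4| < n :=
    calc |(l + 2) * (2 * a - n) - 4|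
        ≤ (l + 2) * |2 * a - n| + 4 := by
          grw [abs_sub _ _, abs_mul, abs_of_nonneg (by omega : 0 ≤ l + 2)]; norm_num
      _ ≤ (l + 2) * l + 4 := by gcongr
      _ < n := by linarith
  have hzero := Int.eq_zero_of_abs_lt_dvd hdvd hsmall
  have : n * (2 * m - l - 2) = 0 := by linear_combination hzero - 2 * h
  rcases mul_eq_zero.mp this with hn0 | hm
  · nlinarith
  · obtain ⟨s, rfl⟩ := hlodd
    omega

end

lemma mem_Icc_union_Icc_of_lt_abs_two_mul_sub {l n a : ℤ} (hn : Odd n) (hl : Odd l)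
    (hlow : l + 2 ≤ a) (hhigh : a ≤ n - l - 2) (hgap : l < |2 * a - n|) :
    a ∈ Set.Icc (l + 2) ((n - l - 2) / 2) ∪ Set.Icc ((n + l + 2) / 2) (n - l - 2) := by
  obtain ⟨t, rfl⟩ := hn
  obtain ⟨s, rfl⟩ := hl
  rw [lt_abs] at hgap
  simp only [Set.mem_union, Set.mem_Icc]
  omega

/-- If `(l+2)a ≡ 2 (mod p)` with `0 ≤ a ≤ p-1`, `l ≥ 1` odd and `p ≥ l²+3l+5`
prime, then `a ∈ [l+2, (p-l-2)/2] ∪ [(p+l+2)/2, p-l-2]`. -/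
theorem stmt_5 (l : ℤ) (hl : 1 ≤ l) (hlodd : Odd l)
    (p : ℕ) (hp : p.Prime) (hpl : l ^ 2 + 3 * l + 5 ≤ (p : ℤ))
    (a : ℤ) (ha0 : 0 ≤ a) (ha1 : a ≤ (p : ℤ) - 1)
    (ha : (l + 2) * a ≡ 2 [ZMOD (p : ℤ)]) :
    a ∈ Set.Icc (l + 2) (((p : ℤ) - l - 2) / 2)
      ∪ Set.Icc (((p : ℤ) + l + 2) / 2) ((p : ℤ) - l - 2) := by
  obtain ⟨m, hm⟩ := ha.symm.dvd
  replace hm : (l + 2) * a = p * m + 2 := by linarith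
  have hpodd : Odd (p : ℤ) := (hp.odd_of_ne_two (by rintro rfl; push_cast at hpl; nlinarith)).natCast
  have hm_pos := pos_of_add_two_mul_eq hm hl (by nlinarith) ha0
  have hm_le := le_add_one_of_add_two_mul_eq hm (by omega) (by nlinarith) ha1
  exact mem_Icc_union_Icc_of_lt_abs_two_mul_sub hpodd hlodd
    (add_two_le_of_add_two_mul_eq hm (by omega) (by omega) hm_pos)
    (le_sub_of_add_two_mul_eq hm (by omega) (by omega) hm_le)
    (lt_abs_two_mul_sub_of_add_two_mul_eq hm (by omega) hlodd (by nlinarith))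
end

section
/- Let l ≥ 1 be an odd integer and let 2 < p < q be primes with q ≥ (p+l)p/2 and (l+2)q ≡ 2 (mod p). Let ρ, σ be the non-negative integers with 1 + pq = (ρ+1)p + (σ+1)q, put s = ⌊2ρ/(p+l)⌋ and τ = ρ - s(p+l)/2. Let r₁ > pq be a prime with r₁(q - sp) ≡ -1 (mod pq). Let w be the integer with 0 ≤ w ≤ p-1 and w(l+2) ≡ 2 (mod p), and assume l+2 ≤ w ≤ (p-l-2)/2. Put α₁⁻ = (ρ+s)p - q, u₁⁻ = -(p-l-2)q/2 + ((p-1)s + τ)p, t₁⁻ = ⌊(α₁⁻ - u₁⁻)r₁/(pq)⌋ + 1 and k₁⁻ = u₁⁻ r₁ + t₁⁻ pq. Then a_{p q r₁}(k₁⁻) = -(p-l-2)/2. -/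
/-!
Kaplan's lemma: for a prime `r ∤ pq`,
`Φ_{pqr} · (1 - X)(1 - X^{pq}) = Φ_{pq}(X^r) · (1 - X^p)(1 - X^q)`, hence
`a_{pqr}(k) = ∑_{e ≤ k/r} a_{pq}(e) g(k - e r)` with `g = kaplanCoeff p q`, the `pq`-periodic
function equal to `1` on `[0, p)`, to `-1` on `[q, q + p)` and to `0` elsewhere.

Put `m = (p - l - 2) / 2`, `d = q - s p` and `u = (s m - 1) p + 1`. Then `k ≡ u r₁` and
`r₁ d ≡ -1 (mod pq)`, and `k / r₁ = α = u + (m - 1) d`. For `e ≤ α` a residue `b` of `k - e r₁`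
forces `e ≡ u + b d (mod pq)`, and as both sides lie in `[0, pq)`, `g(k - e r₁) = 1` exactly for the
`m` values `e = u + B d`, `B < m`; a residue in `[q, q + p)` is impossible, since `p ∣ q - w` would
give `e = u + q w + (b - q) d > α`. By the Lam–Leung form of `Φ_{pq}`, each
`u + B d = p (s (m - B) - 1) + q B + 1` carries the coefficient `-1`, so `a_{pqr₁}(k) = -m`.
-/

open Polynomial Finset
open scoped PowerSeries

theorem cyclotomic_mul_mul_X_pow_sub_one {R : Type*} [CommRing R] {p q : ℕ} (hp : p.Prime)
    (hq : q.Prime) (hpq : p ≠ q) :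
    cyclotomic (p * q) R * ((X ^ p - 1) * (X ^ q - 1)) = (X - 1) * (X ^ (p * q) - 1) := by
  have : Fact p.Prime := ⟨hp⟩
  have hexpand := cyclotomic_expand_eq_cyclotomic_mul hq
    (fun h => hpq ((Nat.prime_dvd_prime_iff_eq hq hp).mp h).symm) R
  have hXp := cyclotomic_prime_mul_X_sub_one R p
  have hXpq : (X : R[X]) ^ (p * q) - 1 = expand R q (X ^ p - 1) := by
    rw [map_sub, map_pow, expand_X, map_one, ← pow_mul, mul_comm]
  rw [hXpq, ← hXp, map_mul, hexpand]
  simp only [map_sub, expand_X, map_one]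
  ring

theorem sub_X_mul_eq_X_sub_one_mul {R : Type*} [CommRing R] {a b a' b' N : ℕ}
    (hab : a + b = N + 1) (ha : a + a' = N) (hb : b + b' = N) :
    ((X : R[X]) ^ a - 1) * (X ^ b - 1) - X * ((X ^ a' - 1) * (X ^ b' - 1)) =
      (X - 1) * (X ^ N - 1) := by
  obtain rfl : b = a' + 1 := by omega
  obtain rfl : a = b' + 1 := by omega
  obtain rfl : N = a' + b' + 1 := by omega
  ring

theorem cyclotomic_mul_eq_lam_leung {R : Type*} [CommRing R] [IsDomain R] {p q ρ σ ρ' σ' : ℕ}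
    (hp : p.Prime) (hq : q.Prime) (hpq : p ≠ q)
    (hρσ : (ρ + 1) * p + (σ + 1) * q = p * q + 1) (hρ : ρ + 1 + ρ' = q)
    (hσ : σ + 1 + σ' = p) :
    cyclotomic (p * q) R =
      (∑ i ∈ range (ρ + 1), X ^ (p * i)) * (∑ j ∈ range (σ + 1), X ^ (q * j))
        - X * ((∑ i ∈ range ρ', X ^ (p * i)) * (∑ j ∈ range σ', X ^ (q * j))) := by
  have hne : ((X : R[X]) ^ p - 1) * (X ^ q - 1) ≠ 0 :=
    mul_ne_zero (X_pow_sub_C_ne_zero hp.pos 1) (X_pow_sub_C_ne_zero hq.pos 1)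
  refine mul_right_cancel₀ hne ?_
  rw [cyclotomic_mul_mul_X_pow_sub_one hp hq hpq,
    ← sub_X_mul_eq_X_sub_one_mul (a := p * (ρ + 1)) (b := q * (σ + 1)) (a' := p * ρ')
      (b' := q * σ') (by linarith) (by rw [← mul_add, hρ]) (by rw [← mul_add, hσ, mul_comm])]
  simp only [pow_mul]
  have geom := fun (x : R[X]) n => geom_sum_mul x n
  linear_combination
    -(∑ j ∈ range (σ + 1), ((X : R[X]) ^ q) ^ j) * (X ^ q - 1) * geom (X ^ p) (ρ + 1)
      - ((X ^ p) ^ (ρ + 1) - 1) * geom (X ^ q) (σ + 1)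
      + X * ((∑ j ∈ range σ', ((X : R[X]) ^ q) ^ j) * (X ^ q - 1) * geom (X ^ p) ρ'
        + ((X ^ p) ^ ρ' - 1) * geom (X ^ q) σ')

theorem eq_of_mul_add_mul_eq_mul_add_mul {p q i i' j j' : ℕ} (hpq : p.Coprime q) (hj : j < p)
    (hj' : j' < p) (h : p * i + q * j = p * i' + q * j') : j = j' := by
  have hmod : q * j ≡ q * j' [MOD p] := by
    simpa [Nat.ModEq, Nat.add_mod] using congrArg (· % p) h
  exact (Nat.ModEq.cancel_left_of_coprime hpq hmod).eq_of_lt_of_lt hj hj'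

theorem coeff_sum_X_pow_mul_sum_X_pow {R : Type*} [Semiring R] (a b n : ℕ) (s t : Finset ℕ) :
    ((∑ i ∈ s, (X : R[X]) ^ (a * i)) * ∑ j ∈ t, X ^ (b * j)).coeff n =
      ∑ i ∈ s, ∑ j ∈ t, if n = a * i + b * j then 1 else 0 := by
  simp only [sum_mul_sum, ← pow_add, finsetSum_coeff, coeff_X_pow]

theorem coeff_cyclotomic_mul_eq_neg_one {p q ρ σ i j : ℕ} (hp : p.Prime) (hq : q.Prime)
    (hpq : p ≠ q) (hρσ : (ρ + 1) * p + (σ + 1) * q = p * q + 1) (hi : ρ + 1 + i < q)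
    (hj : σ + 1 + j < p) :
    (cyclotomic (p * q) ℤ).coeff (p * i + q * j + 1) = -1 := by
  have hcop : p.Coprime q := (Nat.coprime_primes hp hq).mpr hpq
  rw [cyclotomic_mul_eq_lam_leung hp hq hpq hρσ (ρ' := q - (ρ + 1)) (σ' := p - (σ + 1))
    (by omega) (by omega), coeff_sub, coeff_X_mul, coeff_sum_X_pow_mul_sum_X_pow,
    coeff_sum_X_pow_mul_sum_X_pow]
  have hnot : ∀ i' ∈ range (ρ + 1), ∀ j' ∈ range (σ + 1),
      p * i + q * j + 1 ≠ p * i' + q * j' := by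
    intro i' _ j' hj' h
    rw [mem_range] at hj'
    have := eq_of_mul_add_mul_eq_mul_add_mul hcop (i := i + ρ + 1) (i' := i' + q) (j' := j') hj
      (by omega) (by linarith)
    omega
  have hone : ∀ i' ∈ range (q - (ρ + 1)), ∀ j' ∈ range (p - (σ + 1)),
      p * i + q * j = p * i' + q * j' → i' = i ∧ j' = j := by
    intro i' _ j' hj' h
    rw [mem_range] at hj'
    have hjj := eq_of_mul_add_mul_eq_mul_add_mul hcop (by omega) (by omega) h
    subst hjj
    exact ⟨(Nat.eq_of_mul_eq_mul_left hp.pos (by omega)).symm, rfl⟩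
  rw [sum_eq_zero fun i' hi' => sum_eq_zero fun j' hj' => if_neg (hnot i' hi' j' hj'),
    sum_eq_single i, sum_eq_single j, if_pos rfl]
  · norm_num
  · exact fun j' hj' hne => if_neg fun h => hne (hone i (mem_range.2 (by omega)) j' hj' h).2
  · exact fun hj' => absurd (mem_range.2 (by omega)) hj'
  · exact fun i' hi' hne => sum_eq_zero fun j' hj' => if_neg fun h => hne (hone i' hi' j' hj' h).1
  · exact fun hi' => absurd (mem_range.2 (by omega)) hi'

def kaplanCoeff (p q n : ℕ) : ℤ :=
  if n % (p * q) < p then 1 else if q ≤ n % (p * q) ∧ n % (p * q) < q + p then -1 else 0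

theorem mk_kaplanCoeff_mul {p q : ℕ} (hpq : p ≤ q) (hqp : q + p ≤ p * q) :
    PowerSeries.mk (kaplanCoeff p q) * ((1 - PowerSeries.X) * (1 - PowerSeries.X ^ (p * q))) =
      (1 - PowerSeries.X ^ p) * (1 - PowerSeries.X ^ q) := by
  have hperiod : PowerSeries.mk (kaplanCoeff p q) * (1 - PowerSeries.X ^ (p * q)) =
      (∑ i ∈ range p, PowerSeries.X ^ i) * (1 - PowerSeries.X ^ q) := by
    ext n
    simp only [mul_sub, mul_one, map_sub, PowerSeries.coeff_mul_X_pow', map_sum,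
      PowerSeries.coeff_X_pow, sum_ite_eq, mem_range, PowerSeries.coeff_mk, kaplanCoeff]
    by_cases hn : n < p * q
    · rw [Nat.mod_eq_of_lt hn]
      split_ifs <;> omega
    · rw [← Nat.mod_eq_sub_mod (not_lt.1 hn)]
      split_ifs <;> omega
  calc PowerSeries.mk (kaplanCoeff p q) * ((1 - PowerSeries.X) * (1 - PowerSeries.X ^ (p * q)))
      = (∑ i ∈ range p, PowerSeries.X ^ i) * (1 - PowerSeries.X) * (1 - PowerSeries.X ^ q) := by
        rw [mul_left_comm, hperiod]; ring
    _ = (1 - PowerSeries.X ^ p) * (1 - PowerSeries.X ^ q) := by rw [geom_sum_mul_neg]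

theorem coeff_expand_mul_mk {R : Type*} [CommSemiring R] (f : R[X]) (g : ℕ → R) {r : ℕ}
    (hr : 0 < r) (k : ℕ) :
    PowerSeries.coeff k (((expand R r f : R[X]) : R⟦X⟧) * PowerSeries.mk g) =
      ∑ e ∈ range (k / r + 1), f.coeff e * g (k - e * r) := by
  rw [PowerSeries.coeff_mul, Finset.Nat.sum_antidiagonal_eq_sum_range_succ (fun a b =>
    PowerSeries.coeff a ((expand R r f : R[X]) : R⟦X⟧) *
      PowerSeries.coeff b (PowerSeries.mk g))]
  simp only [Polynomial.coeff_coe, PowerSeries.coeff_mk, coeff_expand hr, ite_mul, zero_mul,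
    ← sum_filter]
  refine sum_nbij' (· / r) (· * r) ?_ ?_ ?_ ?_ ?_ <;> simp only [mem_filter, mem_range, and_imp]
  · exact fun a ha _ => Nat.lt_succ_of_le (Nat.div_le_div_right (Nat.lt_succ_iff.mp ha))
  · exact fun e he => ⟨Nat.lt_succ_of_le ((Nat.le_div_iff_mul_le hr).mp (Nat.lt_succ_iff.mp he)),
      dvd_mul_left r e⟩
  · exact fun a _ hra => Nat.div_mul_cancel hra
  · exact fun e _ => Nat.mul_div_cancel e hr
  · exact fun a _ hra => by rw [Nat.div_mul_cancel hra]

theorem coeff_cyclotomic_mul_mul_prime {p q r : ℕ} (hp : p.Prime) (hq : q.Prime) (hr : r.Prime)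
    (hpq : p < q) (hrpq : ¬ r ∣ p * q) (k : ℕ) :
    (cyclotomic (p * q * r) ℤ).coeff k =
      ∑ e ∈ range (k / r + 1),
        (cyclotomic (p * q) ℤ).coeff e * kaplanCoeff p q (k - e * r) := by
  have hpoly : cyclotomic (p * q * r) ℤ * ((1 - X) * (1 - X ^ (p * q))) =
      expand ℤ r (cyclotomic (p * q) ℤ) * ((1 - X ^ p) * (1 - X ^ q)) := by
    linear_combination
      (-cyclotomic (p * q * r) ℤ) * cyclotomic_mul_mul_X_pow_sub_one (R := ℤ) hp hq hpq.ne
        - ((X ^ p - 1) * (X ^ q - 1)) * cyclotomic_expand_eq_cyclotomic_mul hr hrpq ℤ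
  have hne : ((1 - PowerSeries.X) * (1 - PowerSeries.X ^ (p * q)) : ℤ⟦X⟧) ≠ 0 := fun h => by
    simpa [hp.ne_zero, hq.ne_zero] using congrArg PowerSeries.constantCoeff h
  have hseries : (cyclotomic (p * q * r) ℤ : ℤ⟦X⟧) =
      (expand ℤ r (cyclotomic (p * q) ℤ) : ℤ⟦X⟧) * PowerSeries.mk (kaplanCoeff p q) := by
    refine mul_right_cancel₀ hne ?_
    rw [mul_assoc _ (PowerSeries.mk _),
      mk_kaplanCoeff_mul hpq.le (by nlinarith [hp.two_le, hq.two_le])]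
    simpa using congrArg ((↑) : ℤ[X] → ℤ⟦X⟧) hpoly
  rw [← Polynomial.coeff_coe, hseries, coeff_expand_mul_mk _ _ hr.pos]

theorem Int.ModEq.add_mul_of_sub_mul {n c u e r d : ℤ} (hc : c ≡ (u - e) * r [ZMOD n])
    (hrd : r * d ≡ -1 [ZMOD n]) : e ≡ u + c * d [ZMOD n] := by
  rw [Int.modEq_iff_dvd] at hc hrd ⊢
  have h := (hc.mul_left (-d)).sub (hrd.mul_left (u - e))
  rwa [show -d * ((u - e) * r - c) - (u - e) * (-1 - r * d) = u + c * d - e by ring] at h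

theorem natCast_sub_mul_mod_modEq {N k u r e : ℕ} (hk : (k : ℤ) ≡ u * r [ZMOD N])
    (hek : e * r ≤ k) : (((k - e * r) % N : ℕ) : ℤ) ≡ (u - e) * r [ZMOD N] := by
  rw [Int.natCast_mod, Nat.cast_sub hek, Nat.cast_mul, sub_mul]
  exact (Int.mod_modEq _ _).trans (hk.sub_right _)

section window

variable {p q r k u d w m : ℕ}

theorem kaplanCoeff_sub_mul_eq_ite (hk : (k : ℤ) ≡ u * r [ZMOD p * q])
    (hrd : (r : ℤ) * d ≡ -1 [ZMOD p * q]) (hqd : (q : ℤ) * d ≡ q * w [ZMOD p * q])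
    (hd : 0 < d) (hm : 0 < m) (hmp : m ≤ p) (hwin : u + q * w + (p - 1) * d < p * q)
    (hgap : (m - 1) * d < q * w) {e : ℕ} (he : e ≤ u + (m - 1) * d) (hek : e * r ≤ k) :
    kaplanCoeff p q (k - e * r) = if e ∈ (range m).image (u + · * d) then 1 else 0 := by
  have hb : (((k - e * r) % (p * q) : ℕ) : ℤ) ≡ (u - e) * r [ZMOD p * q] := by
    exact_mod_cast natCast_sub_mul_mod_modEq (N := p * q) (by exact_mod_cast hk) hek
  set b := (k - e * r) % (p * q) with hb_def
  have hbN : b < p * q := Nat.mod_lt _ (by omega)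
  have hnat : ∀ x y : ℕ, (x : ℤ) ≡ y [ZMOD p * q] → x < p * q → y < p * q → x = y :=
    fun x y h hx hy => (Int.natCast_modEq_iff.mp (by exact_mod_cast h)).eq_of_lt_of_lt hx hy
  have hkey : (e : ℤ) ≡ u + b * d [ZMOD p * q] := hb.add_mul_of_sub_mul hrd
  have hpd : ∀ x < p, x * d ≤ (p - 1) * d := fun x hx => Nat.mul_le_mul_right _ (by omega)
  have heN : e < p * q := by
    have := Nat.mul_le_mul_right d (show m - 1 ≤ p - 1 by omega); omega
  unfold kaplanCoeff
  rw [← hb_def]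
  by_cases hbp : b < p
  · have heb : e = u + b * d :=
      hnat _ _ (by push_cast; exact hkey) heN (by have := hpd b hbp; omega)
    have hbm : b < m := by
      have : b * d ≤ (m - 1) * d := by omega
      have := Nat.le_of_mul_le_mul_right this hd; omega
    rw [if_pos hbp, if_pos (mem_image.mpr ⟨b, mem_range.mpr hbm, heb.symm⟩)]
  · have hnotq : ¬ (q ≤ b ∧ b < q + p) := by
      rintro ⟨hqb, hbq⟩
      set c := b - q
      have hc : (e : ℤ) ≡ u + q * w + c * d [ZMOD p * q] := by
        refine hkey.trans ?_
        rw [show (b : ℤ) = q + c by omega, add_mul, ← add_assoc]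
        exact ((hqd.add_left _).add_right _)
      have := hnat _ (u + q * w + c * d) (by push_cast; exact hc) heN
        (by have := hpd c (by omega); omega)
      omega
    have hnotmem : e ∉ (range m).image (u + · * d) := by
      intro hmem
      obtain ⟨B, hB, rfl⟩ := mem_image.mp hmem
      rw [mem_range] at hB
      have hBb : (b : ℤ) ≡ B [ZMOD p * q] := by
        refine hb.trans ?_
        rw [show ((u : ℤ) - ↑(u + B * d)) * r = -B * (r * d) by push_cast; ring]
        simpa using hrd.mul_left (-(B : ℤ))
      have hpq : p ≤ p * q :=
        Nat.le_mul_of_pos_right p (Nat.pos_of_mul_pos_left (a := p) (by omega))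
      exact hbp (hnat b B hBb hbN (by omega) ▸ by omega)
    rw [if_neg hbp, if_neg hnotq, if_neg hnotmem]

theorem sum_range_mul_kaplanCoeff_sub_mul (f : ℕ → ℤ) (hk : (k : ℤ) ≡ u * r [ZMOD p * q])
    (hrd : (r : ℤ) * d ≡ -1 [ZMOD p * q]) (hqd : (q : ℤ) * d ≡ q * w [ZMOD p * q])
    (hd : 0 < d) (hm : 0 < m) (hmp : m ≤ p) (hwin : u + q * w + (p - 1) * d < p * q)
    (hgap : (m - 1) * d < q * w) (hkr : (u + (m - 1) * d) * r ≤ k) :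
    ∑ e ∈ range (u + (m - 1) * d + 1), f e * kaplanCoeff p q (k - e * r) =
      ∑ B ∈ range m, f (u + B * d) := by
  have hsub : (range m).image (u + · * d) ⊆ range (u + (m - 1) * d + 1) := by
    intro e he
    obtain ⟨B, hB, rfl⟩ := mem_image.mp he
    have := Nat.mul_le_mul_right d (show B ≤ m - 1 by rw [mem_range] at hB; omega)
    rw [mem_range]; omega
  have hinj : Set.InjOn (u + · * d) (range m) := fun B _ B' _ h =>
    Nat.eq_of_mul_eq_mul_right hd (Nat.add_left_cancel h)
  rw [sum_congr rfl fun e he => by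
    have he' := Nat.lt_succ_iff.mp (mem_range.mp he)
    rw [kaplanCoeff_sub_mul_eq_ite hk hrd hqd hd hm hmp hwin hgap he'
      ((Nat.mul_le_mul_right r he').trans hkr)]]
  simp only [mul_ite, mul_one, mul_zero]
  rw [sum_ite_mem, inter_eq_right.mpr hsub, sum_image hinj]

end window

theorem coeff_cyclotomic_mul_mul_eq_neg_of_window {p q r k ρ m s u d w : ℕ}
    (hp : p.Prime) (hq : q.Prime) (hr : r.Prime) (hpq : p < q) (hqr : p * q < r)
    (hρ : (ρ + 1) * p = m * q + 1) (hm : 0 < m) (hmp : m < p) (hρs : ρ + s * m < q)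
    (hu : u + p = p * (s * m) + 1) (hd : d + s * p = q) (hd0 : 0 < d)
    (hk : (k : ℤ) ≡ u * r [ZMOD p * q]) (hkr : k / r = u + (m - 1) * d)
    (hrd : (r : ℤ) * d ≡ -1 [ZMOD p * q]) (hqd : (q : ℤ) * d ≡ q * w [ZMOD p * q])
    (hwin : u + q * w + (p - 1) * d < p * q) (hgap : (m - 1) * d < q * w) :
    (cyclotomic (p * q * r) ℤ).coeff k = -m := by
  have hrpq : ¬ r ∣ p * q := fun h => (Nat.le_of_dvd (Nat.mul_pos hp.pos hq.pos) h).not_gt hqr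
  have hs : 0 < s := Nat.pos_of_ne_zero fun hs => by
    rw [hs, zero_mul, mul_zero] at hu; have := hp.two_le; omega
  have hρσ : (ρ + 1) * p + (p - 1 - m + 1) * q = p * q + 1 := by
    have : m * q + (p - m) * q = p * q := by rw [← add_mul, Nat.add_sub_cancel' hmp.le]
    rw [show p - 1 - m + 1 = p - m by omega]; omega
  have hcoeff : ∀ B ∈ range m, (cyclotomic (p * q) ℤ).coeff (u + B * d) = -1 := by
    intro B hB
    rw [mem_range] at hB
    have hsB : 1 ≤ s * (m - B) := Nat.one_le_iff_ne_zero.mpr (Nat.mul_ne_zero hs.ne' (by omega))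
    have hsm : s * (m - B) ≤ s * m := Nat.mul_le_mul_left s (Nat.sub_le m B)
    have hrepr : u + B * d = p * (s * (m - B) - 1) + q * B + 1 := by
      zify [hB.le, hsB] at hu hd ⊢
      linear_combination hu + (B : ℤ) * hd
    rw [hrepr]
    exact coeff_cyclotomic_mul_eq_neg_one hp hq hpq.ne hρσ (by omega) (by omega)
  rw [coeff_cyclotomic_mul_mul_prime hp hq hr hpq hrpq, hkr,
    sum_range_mul_kaplanCoeff_sub_mul _ hk hrd hqd hd0 hm hmp.le hwin hgap
      (hkr ▸ Nat.div_mul_le_self k r), sum_congr rfl hcoeff]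
  simp

section bounds

variable {p q ρ σ m s τ : ℤ}

theorem one_le_of_succ_mul_eq (hρ : (ρ + 1) * p = m * q + 1) (hsτ : ρ = s * σ + τ)
    (hτ : 0 ≤ τ) (hτσ : τ < σ) (hq : σ * p < q) (hm : 1 ≤ m) (hp : 0 < p) : 1 ≤ s := by
  have hσ : 0 < σ := by omega
  have hσρ : σ < ρ + 1 :=
    lt_of_mul_lt_mul_right
      (by nlinarith [mul_le_mul_of_nonneg_right hm (by nlinarith : (0 : ℤ) ≤ q)]) hp.le
  by_contra! hs
  nlinarith [mul_le_mul_of_nonneg_right (show s ≤ 0 by omega) hσ.le]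

theorem mul_lt_of_succ_mul_eq (hρ : (ρ + 1) * p = m * q + 1) (hsτ : ρ = s * σ + τ)
    (hτ : 0 ≤ τ) (hm : 0 ≤ m) (hmσ : m < σ) (hq : 0 < q) (hp : 1 < p) : s * p < q := by
  have hsσ : s * σ * p ≤ ρ * p := mul_le_mul_of_nonneg_right (by omega) (by omega)
  have hmq : m * q < σ * q := mul_lt_mul_of_pos_right hmσ hq
  exact lt_of_mul_lt_mul_right (by nlinarith) (show 0 ≤ σ by omega)

theorem add_mul_lt_of_succ_mul_eq (hρ : (ρ + 1) * p = m * q + 1) (hsτ : ρ = s * σ + τ)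
    (hτ : 0 ≤ τ) (hσm : σ + m + 1 = p) (hm : 0 ≤ m) (hmσ : m < σ) (hq : 0 < q)
    (hρ0 : 0 ≤ ρ) :
    ρ + s * m < q := by
  have h1 : (ρ + s * m) * σ ≤ ρ * (p - 1) := by
    nlinarith [mul_le_mul_of_nonneg_right (show s * σ ≤ ρ by omega) hm]
  have h2 : m * (p - 1) < σ * p := by nlinarith
  have h3 : (ρ + s * m) * (σ * p) < q * (σ * p) := by
    nlinarith [mul_le_mul_of_nonneg_right h1 (show (0:ℤ) ≤ p by omega),
      mul_lt_mul_of_pos_left h2 hq]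
  exact lt_of_mul_lt_mul_right h3 (by nlinarith)

theorem sub_one_mul_sub_mul_lt {l w : ℤ} (hρ : (ρ + 1) * p = m * q + 1)
    (hsτ : ρ = s * σ + τ) (hτσ : τ < σ) (hσm : σ + m + 1 = p) (hσl : σ = m + l + 1)
    (hq : σ * p < q) (hl : 1 ≤ l) (hw : l + 2 ≤ w) (hm : 1 ≤ m) :
    (m - 1) * (q - s * p) < q * w := by
  refine lt_of_mul_lt_mul_right ?_ (show 0 ≤ σ by omega)
  have hσ : 0 < σ := by omega
  have hq0 : 0 < q := by nlinarith
  have hdσ : (q - s * p) * σ < (l + 1) * q + p * (σ + 1) := by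
    nlinarith [mul_lt_mul_of_pos_right (show ρ - σ < s * σ by omega) (show 0 < p by omega)]
  have h1 : (m - 1) * (σ + 1) < σ * σ := by
    nlinarith [mul_le_mul_of_nonneg_right (show m - 1 ≤ σ - 3 by omega)
      (show 0 ≤ σ + 1 by omega)]
  have hid : (m - 1) * (l + 1) + σ ≤ (l + 2) * σ := by
    nlinarith [show (l + 2) * σ = (m - 1) * (l + 1) + σ + (l + 1) * (l + 2) by rw [hσl]; ring]
  calc (m - 1) * (q - s * p) * σ
      ≤ (m - 1) * ((l + 1) * q + p * (σ + 1)) := by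
        rw [mul_assoc]; exact mul_le_mul_of_nonneg_left hdσ.le (by omega)
    _ = q * ((m - 1) * (l + 1)) + p * ((m - 1) * (σ + 1)) := by ring
    _ < q * ((m - 1) * (l + 1)) + q * σ := by nlinarith
    _ ≤ q * ((l + 2) * σ) := by nlinarith
    _ ≤ q * w * σ := by
        rw [← mul_assoc]
        exact mul_le_mul_of_nonneg_right (mul_le_mul_of_nonneg_left hw hq0.le) hσ.le

theorem add_mul_add_sub_one_mul_lt {u w : ℤ} (hρ : (ρ + 1) * p = m * q + 1)
    (hsτ : ρ = s * σ + τ) (hτ : 0 ≤ τ) (hτσ : τ < σ) (hσm : σ + m + 1 = p)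
    (hq : σ * p < q) (hw : w ≤ m) (hu : u + p = p * (s * m) + 1) (hp : 0 < p) :
    u + q * w + (p - 1) * (q - s * p) < p * q := by
  have hid : u + (p - 1) * (q - s * p) = τ * p + σ * q := by
    linear_combination hu + p * hsτ - hρ + (s * p - q) * hσm
  have hpq : σ * q + m * q + q = p * q := by rw [← hσm]; ring
  nlinarith [mul_le_mul_of_nonneg_right (show τ ≤ σ - 1 by omega) hp.le,
    mul_le_mul_of_nonneg_left hw (show 0 ≤ q by nlinarith [mul_pos (by omega : 0 < σ) hp])]

end bounds

theorem coeff_cyclotomic_mul_mul_eq_neg {p q r k m : ℕ} {l ρ σ s τ u w : ℤ}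
    (hp : p.Prime) (hq : q.Prime) (hr : r.Prime) (hpq : p < q) (hqr : (p : ℤ) * q < r)
    (hσm : σ + m + 1 = p) (hσl : σ = m + l + 1) (hl : 1 ≤ l) (hρ0 : 0 ≤ ρ)
    (hρ : (ρ + 1) * p = m * q + 1) (hs : s = ρ / σ) (hτ : τ = ρ % σ) (hσq : σ * p < q)
    (hwl : l + 2 ≤ w) (hwm : w ≤ m) (hu : u + p = p * (s * m) + 1)
    (hk : (k : ℤ) ≡ u * r [ZMOD p * q]) (hkr : (k : ℤ) / r = u + (m - 1) * (q - s * p))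
    (hrd : (r : ℤ) * (q - s * p) ≡ -1 [ZMOD p * q])
    (hqd : (q : ℤ) * (q - s * p) ≡ q * w [ZMOD p * q]) :
    (cyclotomic (p * q * r) ℤ).coeff k = -m := by
  have hq0 : (0 : ℤ) < q := by exact_mod_cast hq.pos
  have hp1 : (1 : ℤ) < p := by exact_mod_cast hp.one_lt
  have hσ0 : 0 < σ := by omega
  have hsτ : ρ = s * σ + τ := by rw [hτ, Int.emod_def, hs]; ring
  have hτ0 : 0 ≤ τ := hτ ▸ Int.emod_nonneg _ hσ0.ne'
  have hτσ : τ < σ := hτ ▸ Int.emod_lt_of_pos _ hσ0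
  have hs1 := one_le_of_succ_mul_eq hρ hsτ hτ0 hτσ hσq (by omega) (by omega)
  have hsp := mul_lt_of_succ_mul_eq hρ hsτ hτ0 (by omega) (by omega) hq0 hp1
  have hρs := add_mul_lt_of_succ_mul_eq hρ hsτ hτ0 hσm (by omega) (by omega) hq0 hρ0
  have hgap := sub_one_mul_sub_mul_lt hρ hsτ hτσ hσm hσl hσq hl hwl (by omega)
  have hwin := add_mul_add_sub_one_mul_lt hρ hsτ hτ0 hτσ hσm hσq hwm hu (by omega)
  obtain ⟨d, hd⟩ : ∃ d : ℕ, (q : ℤ) - s * p = d := Int.eq_ofNat_of_zero_le (by omega)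
  rw [hd] at hkr hrd hqd hgap hwin
  have hu0 : 0 ≤ u := by
    have : (p : ℤ) * 1 ≤ p * (s * m) :=
      mul_le_mul_of_nonneg_left (one_le_mul_of_one_le_of_one_le hs1 (by omega)) (by omega)
    linarith
  lift ρ to ℕ using hρ0
  lift s to ℕ using (by omega)
  lift w to ℕ using (by omega)
  lift u to ℕ using hu0
  have hm1 : 1 ≤ m := by omega
  refine coeff_cyclotomic_mul_mul_eq_neg_of_window hp hq hr hpq (by exact_mod_cast hqr)
    (by exact_mod_cast hρ) (by omega) (by omega) (by exact_mod_cast hρs) (by exact_mod_cast hu)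
    (by zify; linarith) (by omega) hk ?_ hrd hqd ?_ ?_
  · zify [hm1]; exact hkr
  · zify [hp.one_le]; exact hwin
  · zify [hm1]; exact hgap

theorem two_mul_eq_add_of_modEq {p q l ρ σ : ℤ} (hl : Odd l) (hl1 : 1 ≤ l) (hlp : l < p)
    (hρ : 0 ≤ ρ) (hσ : 0 ≤ σ) (hq : 0 < q) (hρσ : 1 + p * q = (ρ + 1) * p + (σ + 1) * q)
    (hqcong : (l + 2) * q ≡ 2 [ZMOD p]) : 2 * σ = p + l := by
  have hσp : σ ≤ p - 2 := by nlinarith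
  obtain ⟨c, hc⟩ : p ∣ 2 * σ - l := by
    obtain ⟨a, ha⟩ := hqcong.dvd
    exact ⟨(l + 2) * (q - ρ - 1) + (σ + 1) * a,
      by linear_combination (σ + 1) * ha - (l + 2) * hρσ⟩
  have hc1 : -1 < c := by nlinarith
  have hc2 : c < 2 := by nlinarith
  interval_cases c
  · obtain ⟨j, rfl⟩ := hl; omega
  · linarith

theorem mul_sub_mul_modEq_of_modEq_two {p q c w s : ℤ} (hp : Prime p) (hp2 : ¬ p ∣ 2)
    (hq : c * q ≡ 2 [ZMOD p]) (hw : w * c ≡ 2 [ZMOD p]) :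
    q * (q - s * p) ≡ q * w [ZMOD p * q] := by
  have h : p ∣ c * (q - w) := by
    have := (hw.trans hq.symm).dvd
    rwa [show c * q - w * c = c * (q - w) by ring] at this
  obtain ⟨a, ha⟩ := (hp.dvd_or_dvd h).resolve_left fun hc => hp2 (by
    simpa using hq.dvd.add (hc.mul_right q))
  exact Int.modEq_iff_dvd.mpr ⟨s - a, by linear_combination -q * ha⟩

theorem ediv_eq_of_eq_add_ediv_add_one_mul {k u α r N : ℤ} (hN : 0 < N) (hNr : N < r)
    (hk : k = u * r + ((α - u) * r / N + 1) * N) : k / r = α := by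
  have h1 := Int.lt_ediv_add_one_mul_self ((α - u) * r) hN
  have h2 := Int.ediv_mul_le ((α - u) * r) hN.ne'
  rw [add_mul, one_mul] at h1 hk
  rw [Int.ediv_eq_iff_of_pos (by omega)]
  constructor <;> linarith

theorem stmt_8_general (l : ℤ) (hl : 1 ≤ l) (hlodd : Odd l)
    (p q : ℕ) (hp : p.Prime) (hq : q.Prime) (hpq : p < q)
    (hql : ((p : ℤ) + l) * p / 2 ≤ (q : ℤ))
    (hqcong : (l + 2) * (q : ℤ) ≡ 2 [ZMOD (p : ℤ)])
    (ρ σ : ℤ) (hρ0 : 0 ≤ ρ) (hσ0 : 0 ≤ σ)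
    (hρσ : 1 + (p : ℤ) * q = (ρ + 1) * p + (σ + 1) * q)
    (s τ : ℤ) (hs : s = 2 * ρ / ((p : ℤ) + l)) (hτ : τ = ρ - s * ((p : ℤ) + l) / 2)
    (r₁ : ℕ) (hr₁ : r₁.Prime) (hr₁pq : (p : ℤ) * q < (r₁ : ℤ))
    (hr₁cong : (r₁ : ℤ) * ((q : ℤ) - s * p) ≡ -1 [ZMOD ((p : ℤ) * q)])
    (w : ℤ)
    (hwcong : w * (l + 2) ≡ 2 [ZMOD (p : ℤ)])
    (hwlo : l + 2 ≤ w) (hwhi : w ≤ ((p : ℤ) - l - 2) / 2)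
    (α u t : ℤ)
    (hα : α = (ρ + s) * p - q)
    (hu : u = -(((p : ℤ) - l - 2) * q / 2) + (((p : ℤ) - 1) * s + τ) * p)
    (ht : t = (α - u) * r₁ / ((p : ℤ) * q) + 1)
    (k : ℕ) (hk : (k : ℤ) = u * r₁ + t * ((p : ℤ) * q)) :
    (cyclotomic (p * q * r₁) ℤ).coeff k = -(((p : ℤ) - l - 2) / 2) := by
  have hq0 : (0 : ℤ) < q := by exact_mod_cast hq.pos
  have hσ : 2 * σ = p + l :=
    two_mul_eq_add_of_modEq hlodd hl (by omega) hρ0 hσ0 hq0 hρσ hqcong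
  obtain ⟨m, hm⟩ : ∃ m : ℕ, (p : ℤ) - 1 - σ = m := Int.eq_ofNat_of_zero_le (by omega)
  have hρ : (ρ + 1) * p = m * q + 1 := by linear_combination -hρσ + (q : ℤ) * hm
  have hs' : s = ρ / σ := by rw [hs, ← hσ, Int.mul_ediv_mul_of_pos _ _ two_pos]
  have hτ' : τ = ρ % σ := by
    rw [hτ, ← hσ, show s * (2 * σ) = 2 * (s * σ) by ring,
      Int.mul_ediv_cancel_left _ two_ne_zero, Int.emod_def, hs', mul_comm]
  have hσq : σ * p < q := by
    have hle : σ * p ≤ q := by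
      rwa [← hσ, mul_assoc, Int.mul_ediv_cancel_left _ two_ne_zero] at hql
    refine hle.lt_of_ne fun heq => hpq.ne ((Nat.prime_dvd_prime_iff_eq hp hq).mp ?_)
    exact Int.natCast_dvd_natCast.mp ⟨σ, by rw [← heq, mul_comm]⟩
  have hu' : u + p = p * (s * m) + 1 := by
    rw [hu, show (p : ℤ) - l - 2 = 2 * m by omega, mul_assoc,
      Int.mul_ediv_cancel_left _ two_ne_zero, hτ', Int.emod_def, ← hs']
    linear_combination hρ + (s * p) * hm
  have hkr : (k : ℤ) / r₁ = u + (m - 1) * (q - s * p) := by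
    rw [ediv_eq_of_eq_add_ediv_add_one_mul (by exact_mod_cast Nat.mul_pos hp.pos hq.pos) hr₁pq
      (ht ▸ hk)]
    linear_combination hα + hρ - hu'
  have hkmod : (k : ℤ) ≡ u * r₁ [ZMOD p * q] := by
    rw [hk]; exact Int.add_mul_modulus_modEq_iff.mpr rfl
  rw [show -(((p : ℤ) - l - 2) / 2) = -(m : ℤ) by omega]
  exact coeff_cyclotomic_mul_mul_eq_neg hp hq hr₁ hpq hr₁pq (by omega) (by omega) hl hρ0 hρ
    hs' hτ' hσq hwlo (by omega) hu' hkmod hkr hr₁cong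
    (mul_sub_mul_modEq_of_modEq_two (Nat.prime_iff_prime_int.mp hp)
      (fun h => by have := Int.le_of_dvd two_pos h; omega) hqcong hwcong)

/-- Main construction: the coefficient `a_{pqr₁}(k₁⁻)` equals `-(p-l-2)/2`. -/
theorem stmt_8 (l : ℤ) (hl : 1 ≤ l) (hlodd : Odd l)
    (p q : ℕ) (hp : p.Prime) (hq : q.Prime) (h2p : 2 < p) (hpq : p < q)
    (hql : ((p : ℤ) + l) * p / 2 ≤ (q : ℤ))
    (hqcong : (l + 2) * (q : ℤ) ≡ 2 [ZMOD (p : ℤ)])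
    (ρ σ : ℤ) (hρ0 : 0 ≤ ρ) (hσ0 : 0 ≤ σ)
    (hρσ : 1 + (p : ℤ) * q = (ρ + 1) * p + (σ + 1) * q)
    (s τ : ℤ) (hs : s = 2 * ρ / ((p : ℤ) + l)) (hτ : τ = ρ - s * ((p : ℤ) + l) / 2)
    (r₁ : ℕ) (hr₁ : r₁.Prime) (hr₁pq : (p : ℤ) * q < (r₁ : ℤ))
    (hr₁cong : (r₁ : ℤ) * ((q : ℤ) - s * p) ≡ -1 [ZMOD ((p : ℤ) * q)])
    (w : ℤ) (hw0 : 0 ≤ w) (hw1 : w ≤ (p : ℤ) - 1)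
    (hwcong : w * (l + 2) ≡ 2 [ZMOD (p : ℤ)])
    (hwlo : l + 2 ≤ w) (hwhi : w ≤ ((p : ℤ) - l - 2) / 2)
    (α u t : ℤ)
    (hα : α = (ρ + s) * p - q)
    (hu : u = -(((p : ℤ) - l - 2) * q / 2) + (((p : ℤ) - 1) * s + τ) * p)
    (ht : t = (α - u) * r₁ / ((p : ℤ) * q) + 1)
    (k : ℕ) (hk : (k : ℤ) = u * r₁ + t * ((p : ℤ) * q)) :
    (cyclotomic (p * q * r₁) ℤ).coeff k = -(((p : ℤ) - l - 2) / 2) :=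
  stmt_8_general l hl hlodd p q hp hq hpq hql hqcong ρ σ hρ0 hσ0 hρσ s τ hs hτ r₁ hr₁ hr₁pq hr₁cong
    w hwcong hwlo hwhi α u t hα hu ht k hk
end

section
/- Let p be a prime and suppose β₁, β₂ ∈ B_R(p) satisfy β₁ = p - β₂*. Then β₁ and β₂ both lie in B₁(p) and β₁ = β₂. -/
/-!
Write `x*` for the inverse of `x` mod `p`. From `β₁ = p - β₂*` we get `β₁ ≡ -β₂*`, and inverting
both sides gives `β₂ ≡ -β₁*`. The size bounds built into `B_R(p)` turn both congruences into
equalities `β₁ + β₂* = p = β₂ + β₁*`, and these rule out `B₃(p)` (which forces `β* ≤ β`, hence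
`p - β* > (p - 3) / 2`) for both. The two `B₁(p)` inequalities `p ≤ β + β*` then read
`β₁ ≤ β₂` and `β₂ ≤ β₁`.
-/

-- `βs` stands for `β*`; it is tied to `β` only by the congruence hypotheses of the theorem.
def InB₁ (p β βs : ℕ) : Prop :=
  1 ≤ β ∧ β ≤ (p - 3) / 2 ∧ p ≤ β + βs ∧ βs ≤ 2 * β

def InB₃ (p β βs : ℕ) : Prop :=
  1 ≤ β ∧ β ≤ (p - 3) / 2 ∧ p ≤ 2 * β + βs ∧ βs ≤ β

def InBR (p β βs : ℕ) : Prop :=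
  InB₁ p β βs ∨ InB₃ p β βs

theorem eq_neg_of_mul_eq_one_of_eq_neg {R : Type*} [CommRing R] {a a' b b' : R}
    (ha : a * a' = 1) (hb : b * b' = 1) (h : a = -b') : b = -a' := by
  linear_combination (-b) * ha + (-a') * hb + (b * a') * h

theorem Nat.dvd_add_of_mul_modEq_one {p a a' b b' : ℕ} (ha : a * a' ≡ 1 [MOD p])
    (hb : b * b' ≡ 1 [MOD p]) (h : p ∣ a + b') : p ∣ b + a' := by
  rw [← ZMod.natCast_eq_natCast_iff, Nat.cast_mul, Nat.cast_one] at ha hb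
  rw [← ZMod.natCast_eq_zero_iff, Nat.cast_add, add_eq_zero_iff_eq_neg] at h ⊢
  exact eq_neg_of_mul_eq_one_of_eq_neg ha hb h

namespace InBR

variable {p β βs : ℕ}

theorem bounds (h : InBR p β βs) :
    1 ≤ β ∧ β ≤ (p - 3) / 2 ∧ βs ≤ 2 * β := by
  unfold InBR InB₁ InB₃ at h
  omega

theorem inB₁_of_add_eq {γ : ℕ} (h : InBR p β βs) (hγ : γ ≤ (p - 3) / 2)
    (hsum : γ + βs = p) : InB₁ p β βs := by
  unfold InBR InB₁ InB₃ at *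
  omega

end InBR

theorem stmt_13_general (p : ℕ) (β₁ β₂ βs₁ βs₂ : ℕ)
    (hβs₁inv : β₁ * βs₁ ≡ 1 [MOD p])
    (hβs₂inv : β₂ * βs₂ ≡ 1 [MOD p])
    (hβ₁R : (1 ≤ β₁ ∧ β₁ ≤ (p - 3) / 2 ∧ p ≤ β₁ + βs₁ ∧ βs₁ ≤ 2 * β₁) ∨
            (1 ≤ β₁ ∧ β₁ ≤ (p - 3) / 2 ∧ p ≤ 2 * β₁ + βs₁ ∧ βs₁ ≤ β₁))
    (hβ₂R : (1 ≤ β₂ ∧ β₂ ≤ (p - 3) / 2 ∧ p ≤ β₂ + βs₂ ∧ βs₂ ≤ 2 * β₂) ∨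
            (1 ≤ β₂ ∧ β₂ ≤ (p - 3) / 2 ∧ p ≤ 2 * β₂ + βs₂ ∧ βs₂ ≤ β₂))
    (heq : β₁ = p - βs₂) :
    (1 ≤ β₁ ∧ β₁ ≤ (p - 3) / 2 ∧ p ≤ β₁ + βs₁ ∧ βs₁ ≤ 2 * β₁) ∧
    (1 ≤ β₂ ∧ β₂ ≤ (p - 3) / 2 ∧ p ≤ β₂ + βs₂ ∧ βs₂ ≤ 2 * β₂) ∧
    β₁ = β₂ := by
  obtain ⟨hβ₁pos, hβ₁le, hβs₁le⟩ := InBR.bounds hβ₁R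
  obtain ⟨hβ₂pos, hβ₂le, -⟩ := InBR.bounds hβ₂R
  have hsum₁ : β₁ + βs₂ = p := by omega
  have hsum₂ : β₂ + βs₁ = p :=
    Nat.eq_of_dvd_of_lt_two_mul (by omega)
      (Nat.dvd_add_of_mul_modEq_one hβs₁inv hβs₂inv (hsum₁ ▸ dvd_rfl)) (by omega)
  have hβ₁B₁ : InB₁ p β₁ βs₁ := InBR.inB₁_of_add_eq hβ₁R hβ₂le hsum₂
  have hβ₂B₁ : InB₁ p β₂ βs₂ := InBR.inB₁_of_add_eq hβ₂R hβ₁le hsum₁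
  refine ⟨hβ₁B₁, hβ₂B₁, ?_⟩
  unfold InB₁ at hβ₁B₁ hβ₂B₁
  omega

/-- If `β₁, β₂ ∈ B_R(p)` and `β₁ = p - β₂*`, then `β₁, β₂ ∈ B₁(p)` and
`β₁ = β₂`. -/
theorem stmt_13 (p : ℕ) (hp : p.Prime) (β₁ β₂ βs₁ βs₂ : ℕ)
    (hβs₁1 : 1 ≤ βs₁) (hβs₁2 : βs₁ ≤ p - 1) (hβs₁inv : β₁ * βs₁ ≡ 1 [MOD p])
    (hβs₂1 : 1 ≤ βs₂) (hβs₂2 : βs₂ ≤ p - 1) (hβs₂inv : β₂ * βs₂ ≡ 1 [MOD p])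
    (hβ₁R : (1 ≤ β₁ ∧ β₁ ≤ (p - 3) / 2 ∧ p ≤ β₁ + βs₁ ∧ βs₁ ≤ 2 * β₁) ∨
            (1 ≤ β₁ ∧ β₁ ≤ (p - 3) / 2 ∧ p ≤ 2 * β₁ + βs₁ ∧ βs₁ ≤ β₁))
    (hβ₂R : (1 ≤ β₂ ∧ β₂ ≤ (p - 3) / 2 ∧ p ≤ β₂ + βs₂ ∧ βs₂ ≤ 2 * β₂) ∨
            (1 ≤ β₂ ∧ β₂ ≤ (p - 3) / 2 ∧ p ≤ 2 * β₂ + βs₂ ∧ βs₂ ≤ β₂))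
    (heq : β₁ = p - βs₂) :
    (1 ≤ β₁ ∧ β₁ ≤ (p - 3) / 2 ∧ p ≤ β₁ + βs₁ ∧ βs₁ ≤ 2 * β₁) ∧
    (1 ≤ β₂ ∧ β₂ ≤ (p - 3) / 2 ∧ p ≤ β₂ + βs₂ ∧ βs₂ ≤ 2 * β₂) ∧
    β₁ = β₂ :=
  stmt_13_general p β₁ β₂ βs₁ βs₂ hβs₁inv hβs₂inv hβ₁R hβ₂R heq
end

section
/- Let l ≥ 1 be an odd integer and let 2 < p < q be primes with l ≤ p - 4, q ≥ (p+l)p/2 and (l+2)q ≡ 2 (mod p). Let ρ and σ be the non-negative integers with 1 + pq = (ρ+1)p + (σ+1)q. Then σ = (p+l)/2, 2ρp = pq - (l+2)q - 2p + 2, and 2ρ < q. -/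
/-! Reducing `1 + pq = (ρ+1)p + (σ+1)q` modulo `p` gives `(σ+1)q ≡ 1`, and doubling and comparing
with `(l+2)q ≡ 2` gives `p ∣ (2σ - l)q`, hence `p ∣ 2σ - l` since `p ∤ q`. As `ρ ≥ 0` forces
`σ ≤ p - 2`, the odd number `2σ - l` lies strictly between `-p` and `2p`, so it equals `p`.
The formula for `ρ` is then linear, and it exhibits `2ρp < pq`. -/

theorem Int.eq_of_dvd_of_odd_of_neg_lt_of_lt_three_mul {p n : ℤ} (hdvd : p ∣ n) (hodd : Odd n)
    (hlo : -p < n) (hhi : n < 3 * p) : n = p := by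
  obtain ⟨k, rfl⟩ := hdvd
  have hp : 0 < p := by linarith
  have hk_lo : -1 < k := by nlinarith
  have hk_hi : k < 3 := by nlinarith
  interval_cases k
  · simp at hodd
  · ring
  · exact absurd hodd (by simp [Int.not_odd_iff_even])

theorem add_one_lt_of_one_add_mul_eq {p q ρ σ : ℤ} (hp : 1 < p) (hq : 0 < q) (hρ : 0 ≤ ρ)
    (h : 1 + p * q = (ρ + 1) * p + (σ + 1) * q) : σ + 1 < p := by
  have : (σ + 1) * q < p * q := by nlinarith
  exact lt_of_mul_lt_mul_right this hq.le

theorem dvd_two_mul_sub_of_one_add_mul_eq {p q l ρ σ : ℤ} (hp : Prime p) (hpq : ¬p ∣ q)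
    (h : 1 + p * q = (ρ + 1) * p + (σ + 1) * q) (hcong : (l + 2) * q ≡ 2 [ZMOD p]) :
    p ∣ 2 * σ - l := by
  have hσ : p ∣ (σ + 1) * q - 1 := ⟨q - (ρ + 1), by linear_combination -h⟩
  have hl : p ∣ 2 - (l + 2) * q := hcong.dvd
  have hmul : p ∣ (2 * σ - l) * q := by
    have key : (2 * σ - l) * q = 2 * ((σ + 1) * q - 1) + (2 - (l + 2) * q) := by ring
    rw [key]
    exact dvd_add (dvd_mul_of_dvd_right hσ 2) hl
  exact (hp.dvd_or_dvd hmul).resolve_right hpq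

theorem stmt_16_general (l : ℤ) (hl : 1 ≤ l) (hlodd : Odd l)
    (p q : ℕ) (hp : p.Prime) (hq : q.Prime) (hpq : p < q)
    (hlp : l ≤ (p : ℤ) - 4)
    (hqcong : (l + 2) * (q : ℤ) ≡ 2 [ZMOD (p : ℤ)])
    (ρ σ : ℤ) (hρ0 : 0 ≤ ρ) (hσ0 : 0 ≤ σ)
    (hρσ : 1 + (p : ℤ) * q = (ρ + 1) * p + (σ + 1) * q) :
    σ = ((p : ℤ) + l) / 2 ∧
    2 * ρ * p = (p : ℤ) * q - (l + 2) * q - 2 * p + 2 ∧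
    2 * ρ < (q : ℤ) := by
  have hp_not_dvd_q : ¬(p : ℤ) ∣ q := by
    rw [Int.natCast_dvd_natCast, Nat.prime_dvd_prime_iff_eq hp hq]
    exact hpq.ne
  have hσp : σ + 1 < p :=
    add_one_lt_of_one_add_mul_eq (by exact_mod_cast hp.one_lt) (by exact_mod_cast hq.pos) hρ0 hρσ
  have h2σ : 2 * σ - l = p :=
    Int.eq_of_dvd_of_odd_of_neg_lt_of_lt_three_mul
      (dvd_two_mul_sub_of_one_add_mul_eq (Nat.prime_iff_prime_int.mp hp) hp_not_dvd_q hρσ hqcong)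
      ((even_two_mul σ).sub_odd hlodd) (by linarith) (by linarith)
  have hρ : 2 * ρ * p = (p : ℤ) * q - (l + 2) * q - 2 * p + 2 := by
    linear_combination -2 * hρσ - (q : ℤ) * h2σ
  refine ⟨by omega, hρ, ?_⟩
  have hq_pos : (0 : ℤ) < q := by exact_mod_cast hq.pos
  have : 2 * ρ * p < q * p := by nlinarith
  exact lt_of_mul_lt_mul_right this (by positivity)

/-- Under the hypotheses of the main construction (with `l ≤ p - 4`),
`σ = (p+l)/2`, `2ρp = pq - (l+2)q - 2p + 2` and `2ρ < q`. -/
theorem stmt_16 (l : ℤ) (hl : 1 ≤ l) (hlodd : Odd l)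
    (p q : ℕ) (hp : p.Prime) (hq : q.Prime) (h2p : 2 < p) (hpq : p < q)
    (hlp : l ≤ (p : ℤ) - 4)
    (hql : ((p : ℤ) + l) * p / 2 ≤ (q : ℤ))
    (hqcong : (l + 2) * (q : ℤ) ≡ 2 [ZMOD (p : ℤ)])
    (ρ σ : ℤ) (hρ0 : 0 ≤ ρ) (hσ0 : 0 ≤ σ)
    (hρσ : 1 + (p : ℤ) * q = (ρ + 1) * p + (σ + 1) * q) :
    σ = ((p : ℤ) + l) / 2 ∧
    2 * ρ * p = (p : ℤ) * q - (l + 2) * q - 2 * p + 2 ∧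
    2 * ρ < (q : ℤ) :=
  stmt_16_general l hl hlodd p q hp hq hpq hlp hqcong ρ σ hρ0 hσ0 hρσ
end

section
/- Let l ≥ 1 be an odd integer and let primes 2 < p < q satisfy p ≥ 3l + 8, q ≥ (p+l)p/2 and (l+2)q ≡ 2 (mod p). Let ρ, σ be the non-negative integers with 1 + pq = (ρ+1)p + (σ+1)q, put s = ⌊2ρ/(p+l)⌋ and τ = ρ - s(p+l)/2. Then s ≥ l + 2, q ≥ sp + 1, q ≥ (τ+1)p, and q - (p-l-2)s/2 > ρ. -/
theorem modEq_two_mul_of_mul_modEq {p q l σ : ℤ} (hpq : IsCoprime p q)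
    (hσ : (σ + 1) * q ≡ 1 [ZMOD p]) (hl : (l + 2) * q ≡ 2 [ZMOD p]) : l ≡ 2 * σ [ZMOD p] := by
  refine Int.modEq_iff_dvd.2 (hpq.dvd_of_dvd_mul_right ?_)
  have h := dvd_sub (hσ.dvd.mul_left 2) hl.dvd
  convert dvd_neg.2 h using 1
  ring

theorem two_mul_eq_add_of_modEq_s17 {p l σ : ℤ} (hl : 0 < l) (hlp : l < p) (hodd : Odd l)
    (hσ₀ : 0 ≤ σ) (hσp : σ + 1 < p) (h : l ≡ 2 * σ [ZMOD p]) : 2 * σ = p + l := by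
  -- `2σ - l = p c` lies strictly between `-p` and `2p`, and `c = 0` would make `l` even.
  obtain ⟨c, hc⟩ := h.dvd
  have hc₀ : 0 < c := by
    by_contra! hc₀
    rcases hc₀.lt_or_eq with hc₀ | rfl
    · nlinarith
    · exact (Int.not_even_iff_odd.2 hodd) ⟨σ, by linarith⟩
  have hc₁ : c < 2 := by
    by_contra! hc₁
    nlinarith
  obtain rfl : c = 1 := by omega
  linarith

section Bounds

variable {p q l ρ σ : ℤ}

theorem mul_eq_of_two_mul_eq_add (hρσ : 1 + p * q = (ρ + 1) * p + (σ + 1) * q)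
    (hσ : 2 * σ = p + l) : ρ * p = (σ - l - 1) * q - (p - 1) := by
  linear_combination -hρσ - q * hσ

theorem add_two_le_ediv (hρp : ρ * p = (σ - l - 1) * q - (p - 1)) (hσ : 2 * σ = p + l)
    (hl : 0 ≤ l) (hpl : 3 * l + 8 ≤ p) (hpq : p < q) (hσq : σ * p ≤ q) :
    l + 2 ≤ ρ / σ := by
  rw [Int.le_ediv_iff_mul_le (by omega)]
  refine le_of_mul_le_mul_right ?_ (by omega : 0 < p)
  nlinarith [mul_le_mul_of_nonneg_left hσq (by omega : 0 ≤ l + 2)]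

theorem ediv_mul_add_one_le (hρp : ρ * p < σ * q) (hσ : 0 < σ) (hp : 0 ≤ p) :
    ρ / σ * p + 1 ≤ q := by
  have := Int.ediv_mul_le ρ hσ.ne'
  nlinarith [mul_le_mul_of_nonneg_right this hp]

theorem emod_add_one_mul_le (hσ : 0 < σ) (hp : 0 ≤ p) (hσq : σ * p ≤ q) :
    (ρ % σ + 1) * p ≤ q :=
  (mul_le_mul_of_nonneg_right (Int.emod_lt_of_pos ρ hσ) hp).trans hσq

theorem lt_sub_mul_ediv (hρp : ρ * p < σ * q) (hσ : 2 * σ = p + l) (hl : 0 ≤ l)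
    (hσl : l + 1 ≤ σ) (hρ : 0 ≤ ρ) : ρ < q - (σ - l - 1) * (ρ / σ) := by
  have hσ₀ : 0 < σ := by omega
  have hdiv := mul_le_mul_of_nonneg_left (Int.ediv_mul_le ρ hσ₀.ne') (by omega : 0 ≤ σ - l - 1)
  nlinarith

end Bounds

theorem stmt_17_general (l : ℤ) (hl : 1 ≤ l) (hlodd : Odd l)
    (p q : ℕ) (hp : p.Prime) (hq : q.Prime) (hpq : p < q)
    (hpl : 3 * l + 8 ≤ (p : ℤ))
    (hql : ((p : ℤ) + l) * p / 2 ≤ (q : ℤ))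
    (hqcong : (l + 2) * (q : ℤ) ≡ 2 [ZMOD (p : ℤ)])
    (ρ σ : ℤ) (hρ0 : 0 ≤ ρ) (hσ0 : 0 ≤ σ)
    (hρσ : 1 + (p : ℤ) * q = (ρ + 1) * p + (σ + 1) * q)
    (s τ : ℤ) (hs : s = 2 * ρ / ((p : ℤ) + l)) (hτ : τ = ρ - s * ((p : ℤ) + l) / 2) :
    l + 2 ≤ s ∧
    s * p + 1 ≤ (q : ℤ) ∧
    (τ + 1) * p ≤ (q : ℤ) ∧
    ρ < (q : ℤ) - ((p : ℤ) - l - 2) * s / 2 := by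
  have hpq' : (p : ℤ) < q := by exact_mod_cast hpq
  have hcop : IsCoprime (p : ℤ) q := Nat.Coprime.isCoprime ((Nat.coprime_primes hp hq).2 hpq.ne)
  have hσp := add_one_lt_of_one_add_mul_eq (by omega) (by omega) hρ0 hρσ
  have hσq : (σ + 1) * q ≡ 1 [ZMOD p] := Int.modEq_iff_dvd.2 ⟨ρ + 1 - q, by linear_combination hρσ⟩
  have h2σ : 2 * σ = p + l := two_mul_eq_add_of_modEq_s17 (by omega) (by omega) hlodd hσ0 hσp
    (modEq_two_mul_of_mul_modEq hcop hσq hqcong)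
  have hs' : s = ρ / σ := by rw [hs, ← h2σ, Int.mul_ediv_mul_of_pos _ _ two_pos]
  have hτ' : τ = ρ % σ := by
    rw [hτ, ← h2σ, mul_left_comm, Int.mul_ediv_cancel_left _ two_ne_zero, Int.emod_def, hs', mul_comm]
  have hσpq : σ * p ≤ q := by
    rwa [← h2σ, mul_assoc, Int.mul_ediv_cancel_left _ two_ne_zero] at hql
  have hρp := mul_eq_of_two_mul_eq_add hρσ h2σ
  have hρp' : ρ * p < σ * q := by nlinarith
  have hhalf : ((p : ℤ) - l - 2) * s / 2 = (σ - l - 1) * s := by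
    rw [show (p : ℤ) - l - 2 = 2 * (σ - l - 1) by omega, mul_assoc,
      Int.mul_ediv_cancel_left _ two_ne_zero]
  rw [hhalf, hτ', hs']
  exact ⟨add_two_le_ediv hρp h2σ (by omega) hpl hpq' hσpq, ediv_mul_add_one_le hρp' (by omega) (by omega),
    emod_add_one_mul_le (by omega) (by omega) hσpq, lt_sub_mul_ediv hρp' h2σ (by omega) (by omega) hρ0⟩

/-- Under the hypotheses of the main construction (with `p ≥ 3l + 8`),
`s ≥ l + 2`, `q ≥ sp + 1`, `q ≥ (τ+1)p` and `q - (p-l-2)s/2 > ρ`. -/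
theorem stmt_17 (l : ℤ) (hl : 1 ≤ l) (hlodd : Odd l)
    (p q : ℕ) (hp : p.Prime) (hq : q.Prime) (h2p : 2 < p) (hpq : p < q)
    (hpl : 3 * l + 8 ≤ (p : ℤ))
    (hql : ((p : ℤ) + l) * p / 2 ≤ (q : ℤ))
    (hqcong : (l + 2) * (q : ℤ) ≡ 2 [ZMOD (p : ℤ)])
    (ρ σ : ℤ) (hρ0 : 0 ≤ ρ) (hσ0 : 0 ≤ σ)
    (hρσ : 1 + (p : ℤ) * q = (ρ + 1) * p + (σ + 1) * q)
    (s τ : ℤ) (hs : s = 2 * ρ / ((p : ℤ) + l)) (hτ : τ = ρ - s * ((p : ℤ) + l) / 2) :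
    l + 2 ≤ s ∧
    s * p + 1 ≤ (q : ℤ) ∧
    (τ + 1) * p ≤ (q : ℤ) ∧
    ρ < (q : ℤ) - ((p : ℤ) - l - 2) * s / 2 :=
  stmt_17_general l hl hlodd p q hp hq hpq hpl hql hqcong ρ σ hρ0 hσ0 hρσ s τ hs hτ
end

section
/- Let 2 < p < q < r be primes, let k ≥ 0 be an integer, and for an integer m let f(m) be the unique integer with 0 ≤ f(m) < pq and r·f(m) ≡ k - m (mod pq). Let γ be the unique integer with 0 ≤ γ < pq and r·γ ≡ -1 (mod pq), and let [γ]_q be the unique integer with 0 ≤ [γ]_q ≤ p-1 and [γ]_q · q ≡ γ (mod p). Then for every integer m, f(m+q) ≡ f(m) + q²·[γ]_q (mod pq). -/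
/-!
Since `r γ ≡ -1 (mod pq)`, multiplying by `-γ` inverts `r`, so `f(m) ≡ -γ (k - m)` and hence
`f(m + q) - f(m) ≡ γ q (mod pq)`. Multiplying `[γ]_q q ≡ γ (mod p)` by `q` gives
`q² [γ]_q ≡ γ q (mod pq)`.
-/

namespace Int

theorem ModEq.modEq_neg_mul_of_mul_modEq_neg_one {n r γ x a : ℤ}
    (hγ : r * γ ≡ -1 [ZMOD n]) (h : r * x ≡ a [ZMOD n]) : x ≡ -γ * a [ZMOD n] :=
  calc x = -(-1 * x) := by ring
    _ ≡ -(r * γ * x) [ZMOD n] := ((hγ.mul_right x).symm).neg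
    _ = -γ * (r * x) := by ring
    _ ≡ -γ * a [ZMOD n] := h.mul_left _

end Int

theorem stmt_18_general (p q r : ℕ) (k : ℕ)
    (f : ℤ → ℤ)
    (hf : ∀ m : ℤ, 0 ≤ f m ∧ f m < (p : ℤ) * q ∧
      (r : ℤ) * f m ≡ (k : ℤ) - m [ZMOD ((p : ℤ) * q)])
    (γ : ℤ)
    (hγ : (r : ℤ) * γ ≡ -1 [ZMOD ((p : ℤ) * q)])
    (γq : ℤ)
    (hγq : γq * q ≡ γ [ZMOD (p : ℤ)]) :
    ∀ m : ℤ, f (m + q) ≡ f m + (q : ℤ) ^ 2 * γq [ZMOD ((p : ℤ) * q)] := by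
  intro m
  have hf_eq (m : ℤ) : f m ≡ -γ * (k - m) [ZMOD ((p : ℤ) * q)] :=
    hγ.modEq_neg_mul_of_mul_modEq_neg_one (hf m).2.2
  have hγq_mul : (q : ℤ) ^ 2 * γq ≡ γ * q [ZMOD ((p : ℤ) * q)] := by
    simpa only [sq, mul_comm, mul_left_comm] using hγq.mul_right' (c := (q : ℤ))
  calc f (m + q) ≡ -γ * (k - (m + q)) [ZMOD ((p : ℤ) * q)] := hf_eq (m + q)
    _ = -γ * (k - m) + γ * q := by ring
    _ ≡ f m + (q : ℤ) ^ 2 * γq [ZMOD ((p : ℤ) * q)] := (hf_eq m).symm.add hγq_mul.symm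

/-- For primes `2 < p < q < r`, `k ≥ 0`, with `f(m)` the unique residue mod
`pq` of `r⁻¹(k-m)`, `γ` the residue of `-r⁻¹` and `[γ]_q` its `q`-part, one has
`f(m+q) ≡ f(m) + q²[γ]_q (mod pq)` for every integer `m`. -/
theorem stmt_18 (p q r : ℕ) (hp : p.Prime) (hq : q.Prime) (hr : r.Prime)
    (h2p : 2 < p) (hpq : p < q) (hqr : q < r) (k : ℕ)
    (f : ℤ → ℤ)
    (hf : ∀ m : ℤ, 0 ≤ f m ∧ f m < (p : ℤ) * q ∧
      (r : ℤ) * f m ≡ (k : ℤ) - m [ZMOD ((p : ℤ) * q)])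
    (γ : ℤ) (hγ0 : 0 ≤ γ) (hγ1 : γ < (p : ℤ) * q)
    (hγ : (r : ℤ) * γ ≡ -1 [ZMOD ((p : ℤ) * q)])
    (γq : ℤ) (hγq0 : 0 ≤ γq) (hγq1 : γq ≤ (p : ℤ) - 1)
    (hγq : γq * q ≡ γ [ZMOD (p : ℤ)]) :
    ∀ m : ℤ, f (m + q) ≡ f m + (q : ℤ) ^ 2 * γq [ZMOD ((p : ℤ) * q)] :=
  stmt_18_general p q r k f hf γ hγ γq hγq
end
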